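/- arXiv:math/9305204 — 4 statements merged into one kernel-verified Lean document; each statement's English description precedes it below -/
import Mathlib

section
/- If G is a free abelian group of uncountable cardinality, then player ∃ has a winning strategy in the game G_{ω₁}(F(ω₁),G) of length ω₁. -/
universe u v w x t

open FirstOrder

noncomputable section

/-- `ω₁` as an ordinal. -/
def omega1 : Ordinal.{0} := (Cardinal.aleph 1).ord

/-- `ω₂` as an ordinal. -/
def omega2 : Ordinal.{0} := (Cardinal.aleph 2).ord

/-- `ω₃` as an ordinal. -/
def omega3 : Ordinal.{0} := (Cardinal.aleph 3).ord

/-- In a round of the EF game the reply must lie on the opposite side: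
if `x ∈ A` then `y ∈ B` and vice versa. -/
def Opp {M : Type u} {N : Type v} : M ⊕ N → M ⊕ N → Prop
  | Sum.inl _, Sum.inr _ => True
  | Sum.inr _, Sum.inl _ => True
  | _, _ => False

/-- The pairs of `A × B` named by a single round `(x, y)` of the game. -/
def pairRel {M : Type u} {N : Type v} (x y : M ⊕ N) : Set (M × N) :=
  {p | (x = Sum.inl p.1 ∧ y = Sum.inr p.2) ∨ (x = Sum.inr p.2 ∧ y = Sum.inl p.1)}

/-- `π ⊆ A × B` is a partial isomorphism between the `L`-structures `SM` and `SN`: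
it is an injective partial function and preserves all relations in both directions
(the vocabulary is relational). -/
def IsPartialIso (L : FirstOrder.Language.{u, v}) {M : Type w} {N : Type x} (SM : L.Structure M)
    (SN : L.Structure N) (π : Set (M × N)) : Prop :=
  (∀ p ∈ π, ∀ q ∈ π, (p.1 = q.1 ↔ p.2 = q.2)) ∧
  ∀ (n : ℕ) (R : L.Relations n) (a : Fin n → M) (b : Fin n → N),
    (∀ i, (a i, b i) ∈ π) → (SM.RelMap R a ↔ SN.RelMap R b)

/-- The relation `π ⊆ A × B` determined by a play of length `γ`;
`(p β).1` is the move of player ∀ and `(p β).2` the reply of player ∃ in round `β`. -/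
def playRel {M : Type u} {N : Type v} (γ : Ordinal.{t})
    (p : Ordinal.{t} → (M ⊕ N) × (M ⊕ N)) : Set (M × N) :=
  ⋃ β ∈ Set.Iio γ, pairRel (p β).1 (p β).2

/-- Player ∃ wins the play `p` of the game of length `γ`: in every round the reply of ∃ is on
the opposite side, and the resulting relation is a partial isomorphism. -/
def ExistsWinsPlay (L : FirstOrder.Language.{u, v}) {M : Type w} {N : Type x} (SM : L.Structure M)
    (SN : L.Structure N) (γ : Ordinal.{t}) (p : Ordinal.{t} → (M ⊕ N) × (M ⊕ N)) : Prop :=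
  (∀ β < γ, Opp (p β).1 (p β).2) ∧ IsPartialIso L SM SN (playRel γ p)

/-- Player ∃ has a winning strategy in the Ehrenfeucht–Fraïssé game of length `γ` between the
`L`-structures `SM` and `SN`.  A strategy of ∃ assigns a reply to every position
`(β, history, current move of ∀)`; it may depend only on the rounds `< β` of the history.
It is winning if every play in which all replies of ∃ are given by the strategy is won by ∃. -/
def ExistsWinsEF (L : FirstOrder.Language.{u, v}) {M : Type w} {N : Type x} (SM : L.Structure M)
    (SN : L.Structure N) (γ : Ordinal.{t}) : Prop :=
  ∃ σ : Ordinal.{t} → (Ordinal.{t} → (M ⊕ N) × (M ⊕ N)) → (M ⊕ N) → (M ⊕ N),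
    (∀ β pl pl' x, (∀ i < β, pl i = pl' i) → σ β pl x = σ β pl' x) ∧
    ∀ pl : Ordinal.{t} → (M ⊕ N) × (M ⊕ N),
      (∀ β < γ, (pl β).2 = σ β pl (pl β).1) → ExistsWinsPlay L SM SN γ pl

/-- Player ∀ has a winning strategy in the Ehrenfeucht–Fraïssé game of length `γ` between the
`L`-structures `SM` and `SN`.  A strategy of ∀ assigns a move to every position
`(β, history)`; it may depend only on the rounds `< β` of the history.  It is winning if
no play in which all moves of ∀ are given by the strategy is won by ∃. -/
def ForallWinsEF (L : FirstOrder.Language.{u, v}) {M : Type w} {N : Type x} (SM : L.Structure M)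
    (SN : L.Structure N) (γ : Ordinal.{t}) : Prop :=
  ∃ σ : Ordinal.{t} → (Ordinal.{t} → (M ⊕ N) × (M ⊕ N)) → (M ⊕ N),
    (∀ β pl pl', (∀ i < β, pl i = pl' i) → σ β pl = σ β pl') ∧
    ∀ pl : Ordinal.{t} → (M ⊕ N) × (M ⊕ N),
      (∀ β < γ, (pl β).1 = σ β pl) → ¬ ExistsWinsPlay L SM SN γ pl

/-- Isomorphism of structures in a relational vocabulary: a bijection preserving all
relations in both directions. -/
def StructIso (L : FirstOrder.Language.{u, v}) {M : Type w} {N : Type x} (SM : L.Structure M)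
    (SN : L.Structure N) : Prop :=
  ∃ f : M ≃ N, ∀ (n : ℕ) (R : L.Relations n) (a : Fin n → M),
    SM.RelMap R a ↔ SN.RelMap R (fun i => f (a i))

/-- The relational vocabulary for abelian groups: one ternary relation (for `x + y = z`). -/
def addLang : FirstOrder.Language.{0, 0} where
  Functions := fun _ => Empty
  Relations := fun n => PLift (n = 3)

/-- An abelian group as an `addLang`-structure: the ternary relation holds of `(x, y, z)`
iff `x + y = z`. -/
def addStructure (G : Type u) [AddCommGroup G] : addLang.Structure G where
  funMap := fun f _ => f.elim
  RelMap := fun {n} r v =>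
    have h : n = 3 := r.down
    v ⟨0, by omega⟩ + v ⟨1, by omega⟩ = v ⟨2, by omega⟩

/-- `F(ω₁)`, the free abelian group on `ℵ₁` generators. -/
abbrev Fomega1 : Type := FreeAbelianGroup omega1.ToType

/-- Player ∃ has a winning strategy in `G_γ(A, B)` for abelian groups `A`, `B`. -/
def ExistsWinsG (A : Type u) [AddCommGroup A] (B : Type v) [AddCommGroup B]
    (γ : Ordinal.{0}) : Prop :=
  ExistsWinsEF addLang (addStructure A) (addStructure B) γ

/-- Player ∀ has a winning strategy in `G_γ(A, B)` for abelian groups `A`, `B`. -/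
def ForallWinsG (A : Type u) [AddCommGroup A] (B : Type v) [AddCommGroup B]
    (γ : Ordinal.{0}) : Prop :=
  ForallWinsEF addLang (addStructure A) (addStructure B) γ

/-- `G` is a free abelian group. -/
def FreeAbelian (G : Type u) [AddCommGroup G] : Prop := Module.Free ℤ G

/-- `γ` is a limit point of the set `C` of ordinals. -/
def IsLimitPt (C : Set Ordinal.{0}) (γ : Ordinal.{0}) : Prop :=
  0 < γ ∧ ∀ β < γ, ∃ x ∈ C, β < x ∧ x < γ

/-- `C` is closed below `α`: every limit point of `C` below `α` belongs to `C`. -/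
def ClosedIn (C : Set Ordinal.{0}) (α : Ordinal.{0}) : Prop :=
  ∀ γ < α, IsLimitPt C γ → γ ∈ C

/-- `C` is a closed unbounded (cub) subset of `α`. -/
def ClubIn (C : Set Ordinal.{0}) (α : Ordinal.{0}) : Prop :=
  C ⊆ Set.Iio α ∧ ClosedIn C α ∧ ∀ β < α, ∃ x ∈ C, β ≤ x

/-- `S` is stationary in `κ`: it meets every cub subset of `κ`. -/
def StationaryIn (S : Set Ordinal.{0}) (κ : Ordinal.{0}) : Prop :=
  ∀ C, ClubIn C κ → (S ∩ C).Nonempty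

/-- The set `s` of ordinals has order type `o`: there is an order isomorphism from the
ordinals below `o` onto `s`. -/
def HasOrderType (s : Set Ordinal.{0}) (o : Ordinal.{0}) : Prop :=
  ∃ e : Ordinal.{0} → Ordinal.{0}, StrictMonoOn e (Set.Iio o) ∧ e '' Set.Iio o = s

/-- `C ⊆ ω₂` is `ω₁`-closed: the supremum of every strictly increasing `ω₁`-sequence of
elements of `C` lies in `C`. -/
def Omega1Closed (C : Set Ordinal.{0}) : Prop :=
  ∀ f : Ordinal.{0} → Ordinal.{0}, StrictMonoOn f (Set.Iio omega1) →
    (∀ i < omega1, f i ∈ C) → sSup (f '' Set.Iio omega1) ∈ C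

/-- `S ⊆ ω₂` is `ω₁`-stationary: it meets every `ω₁`-closed unbounded subset of `ω₂`. -/
def Omega1Stationary (S : Set Ordinal.{0}) : Prop :=
  ∀ C, C ⊆ Set.Iio omega2 → Omega1Closed C → (∀ β < omega2, ∃ x ∈ C, β ≤ x) →
    (S ∩ C).Nonempty

/-- A `□_{ω₁}`-sequence: `C α` is cub in `α` for limit `α < ω₂`, is countable when
`cf(α) = ω`, and the sequence is coherent at limit points. -/
def IsSquareOmega1 (C : Ordinal.{0} → Set Ordinal.{0}) : Prop :=
  ∀ α, α < omega2 → Order.IsSuccLimit α →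
    ClubIn (C α) α ∧
    (Ordinal.cof α = Cardinal.aleph0 → Cardinal.mk (C α) = Cardinal.aleph0) ∧
    ∀ γ, γ < α → IsLimitPt (C α) γ → C γ = C α ∩ Set.Iio γ

/-- An abelian group is `ℵ₁`-free if all of its countable subgroups are free. -/
def Aleph1Free (G : Type u) [AddCommGroup G] : Prop :=
  ∀ H : AddSubgroup G, (H : Set G).Countable → FreeAbelian H

/-- The induced structure on a subset of a structure in a relational vocabulary. -/
def restrictStructure (L : FirstOrder.Language.{u, v}) [L.IsRelational] {M : Type w}
    (SM : L.Structure M) (s : Set M) : L.Structure s where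
  funMap := fun f _ => isEmptyElim f
  RelMap := fun r v => SM.RelMap r fun i => (v i : M)

/-- The relational vocabulary with a single binary relation symbol. -/
def binLang : FirstOrder.Language.{0, 0} where
  Functions := fun _ => Empty
  Relations := fun n => PLift (n = 2)

/-- The `binLang`-structure given by a binary relation `r`. -/
def binStructure {M : Type u} (r : M → M → Prop) : binLang.Structure M where
  funMap := fun f _ => f.elim
  RelMap := fun {n} R v =>
    have h : n = 2 := R.down
    r (v ⟨0, by omega⟩) (v ⟨1, by omega⟩)

end



namespace EFM

variable {I : Type u} {J : Type v}

/-- `R` is the graph of a partial bijection between `I` and `J`. -/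
def Matching (R : Set (I × J)) : Prop := ∀ p ∈ R, ∀ q ∈ R, p.1 = q.1 ↔ p.2 = q.2

def dom (R : Set (I × J)) : Set I := {i | ∃ j, (i, j) ∈ R}

def swap (R : Set (I × J)) : Set (J × I) := {q | (q.2, q.1) ∈ R}

@[simp] lemma swap_swap (R : Set (I × J)) : swap (swap R) = R := rfl

lemma mem_swap {R : Set (I × J)} {j : J} {i : I} : (j, i) ∈ swap R ↔ (i, j) ∈ R := Iff.rfl

lemma Matching.swap {R : Set (I × J)} (hR : Matching R) : Matching (swap R) := by
  intro p hp q hq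
  exact (hR _ hp _ hq).symm

lemma Matching.mono_union {ι : Sort*} {f : ι → Set (I × J)}
    (hdir : ∀ a b : ι, ∃ c, f a ⊆ f c ∧ f b ⊆ f c) (h : ∀ a, Matching (f a)) :
    Matching (⋃ a, f a) := by
  intro p hp q hq
  obtain ⟨a, hpa⟩ := Set.mem_iUnion.mp hp
  obtain ⟨b, hqb⟩ := Set.mem_iUnion.mp hq
  obtain ⟨c, hac, hbc⟩ := hdir a b
  exact h c _ (hac hpa) _ (hbc hqb)

lemma swap_countable {R : Set (I × J)} (hc : R.Countable) : (swap R).Countable := by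
  have : swap R = (fun p : I × J => (p.2, p.1)) '' R := by
    ext ⟨j, i⟩
    constructor
    · intro h; exact ⟨(i, j), h, rfl⟩
    · rintro ⟨⟨i', j'⟩, h, heq⟩
      cases heq; exact h
  rw [this]; exact hc.image _

noncomputable def mOf [Nonempty J] (R : Set (I × J)) (i : I) : J :=
  letI := Classical.propDecidable (∃ j, (i, j) ∈ R)
  if h : ∃ j, (i, j) ∈ R then h.choose else Classical.arbitrary J

lemma mOf_mem [Nonempty J] {R : Set (I × J)} {i : I} (h : i ∈ dom R) : (i, mOf R i) ∈ R := by
  have h' : ∃ j, (i, j) ∈ R := h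
  rw [mOf, dif_pos h']
  exact h'.choose_spec

lemma mOf_eq [Nonempty J] {R : Set (I × J)} (hR : Matching R) {i : I} {j : J}
    (h : (i, j) ∈ R) : mOf R i = j :=
  (hR (i, mOf R i) (mOf_mem ⟨j, h⟩) (i, j) h).mp rfl

variable {A : Type u} {B : Type v} [AddCommGroup A] [AddCommGroup B]

variable (bI : Module.Basis I ℤ A) (bJ : Module.Basis J ℤ B)

/-- The linear map induced by a matching. -/
noncomputable def phi [Nonempty J] (R : Set (I × J)) : A →ₗ[ℤ] B :=
  Module.Basis.constr bI ℕ fun i => bJ (mOf R i)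

/-- The span of the basis vectors whose indices are in the domain of `R`. -/
def spanD (R : Set (I × J)) : Submodule ℤ A := Submodule.span ℤ (bI '' dom R)

lemma phi_basis [Nonempty J] (R : Set (I × J)) (i : I) :
    phi bI bJ R (bI i) = bJ (mOf R i) := by
  unfold phi
  exact Module.Basis.constr_basis bI ℕ (fun i => bJ (mOf R i)) i

lemma spanD_mono {R R' : Set (I × J)} (h : R ⊆ R') : spanD bI R ≤ spanD bI R' :=
  Submodule.span_mono (Set.image_mono fun _ hi => hi.imp fun _ hj => h hj)

lemma phi_mono [Nonempty J] {R R' : Set (I × J)} (hR' : Matching R') (hss : R ⊆ R')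
    {x : A} (hx : x ∈ spanD bI R) : phi bI bJ R x = phi bI bJ R' x := by
  have : Set.EqOn (phi bI bJ R) (phi bI bJ R') (bI '' dom R) := by
    rintro _ ⟨i, hi, rfl⟩
    rw [phi_basis, phi_basis, mOf_eq hR' (hss (mOf_mem hi))]
  exact LinearMap.eqOn_span' this hx

lemma phi_phi [Nonempty I] [Nonempty J] {R : Set (I × J)} (hR : Matching R)
    {x : A} (hx : x ∈ spanD bI R) : phi bJ bI (swap R) (phi bI bJ R x) = x := by
  have : Set.EqOn ((phi bJ bI (swap R)).comp (phi bI bJ R)) (LinearMap.id : A →ₗ[ℤ] A)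
      (bI '' dom R) := by
    rintro _ ⟨i, hi, rfl⟩
    have h1 : (i, mOf R i) ∈ R := mOf_mem hi
    have h2 : mOf (swap R) (mOf R i) = i := mOf_eq hR.swap (mem_swap.mpr h1)
    simp only [LinearMap.comp_apply, LinearMap.id_apply, phi_basis, h2]
  exact LinearMap.eqOn_span' this hx

lemma phi_mem_span [Nonempty J] {R : Set (I × J)} {x : A} (hx : x ∈ spanD bI R) :
    phi bI bJ R x ∈ spanD bJ (swap R) := by
  have h1 : phi bI bJ R x ∈ Submodule.span ℤ ((phi bI bJ R) '' (bI '' dom R)) :=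
    Submodule.apply_mem_span_image_of_mem_span _ hx
  refine Submodule.span_le.mpr ?_ h1
  rintro _ ⟨_, ⟨i, hi, rfl⟩, rfl⟩
  rw [phi_basis]
  exact Submodule.subset_span ⟨mOf R i, ⟨i, mOf_mem hi⟩, rfl⟩

/-- Extension lemma: a countable matching can be extended to cover any given `x : A`. -/
lemma exists_ext [Nonempty J] [Uncountable J] {R : Set (I × J)} (hR : Matching R)
    (hc : R.Countable) (x : A) :
    ∃ R', R ⊆ R' ∧ Matching R' ∧ R'.Countable ∧ x ∈ spanD bI R' := by
  classical
  set t : Set I := ↑(bI.repr x).support \ dom R with ht_def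
  have ht : t.Finite := (Finset.finite_toSet _).diff
  have hran : (Prod.snd '' R).Countable := hc.image _
  have hinf : ((Prod.snd '' R)ᶜ : Set J).Infinite := by
    intro hfin
    have : (Set.univ : Set J).Countable := by
      rw [← Set.union_compl_self (Prod.snd '' R)]
      exact hran.union hfin.countable
    exact (not_countable (α := J)) (Set.countable_univ_iff.mp this)
  obtain ⟨e, he⟩ := Set.countable_iff_exists_injective.mp ht.countable
  set emb := hinf.natEmbedding with hemb
  set g : I → J := fun i => if h : i ∈ t then (emb (e ⟨i, h⟩) : J) else Classical.arbitrary J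
    with hg
  have hg_mem : ∀ i ∈ t, g i ∈ (Prod.snd '' R)ᶜ := by
    intro i hi; rw [hg]; simp only [dif_pos hi]; exact (emb (e ⟨i, hi⟩)).2
  have hg_inj : ∀ i ∈ t, ∀ i' ∈ t, g i = g i' → i = i' := by
    intro i hi i' hi' hgg
    rw [hg] at hgg
    simp only [dif_pos hi, dif_pos hi'] at hgg
    have := he (emb.injective (Subtype.ext hgg))
    exact congrArg Subtype.val this
  refine ⟨R ∪ (fun i => (i, g i)) '' t, Set.subset_union_left, ?_, ?_, ?_⟩
  · have hcase : ∀ u1 u2, (u1, u2) ∈ (fun i => (i, g i)) '' t → u1 ∈ t ∧ u2 = g u1 := by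
      rintro u1 u2 ⟨i, hi, heq⟩
      cases heq
      exact ⟨hi, rfl⟩
    rintro ⟨a1, a2⟩ hp ⟨c1, c2⟩ hq
    show a1 = c1 ↔ a2 = c2
    rcases hp with hp | hp' <;> rcases hq with hq | hq'
    · exact hR _ hp _ hq
    · obtain ⟨hc1t, hc2g⟩ := hcase c1 c2 hq'
      constructor
      · intro h; exact absurd ⟨a2, by rw [← h]; exact hp⟩ hc1t.2
      · intro h; exact absurd ⟨(a1, a2), hp, h.trans hc2g⟩ (hg_mem c1 hc1t)
    · obtain ⟨ha1t, ha2g⟩ := hcase a1 a2 hp'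
      constructor
      · intro h; exact absurd ⟨c2, by rw [h]; exact hq⟩ ha1t.2
      · intro h; exact absurd ⟨(c1, c2), hq, h.symm.trans ha2g⟩ (hg_mem a1 ha1t)
    · obtain ⟨ha1t, ha2g⟩ := hcase a1 a2 hp'
      obtain ⟨hc1t, hc2g⟩ := hcase c1 c2 hq'
      subst ha2g; subst hc2g
      exact ⟨fun h => by rw [h], fun h => hg_inj _ ha1t _ hc1t h⟩
  · exact hc.union ((ht.image _).countable)
  · rw [spanD, bI.mem_span_image]
    intro i hi
    by_cases h : i ∈ dom R
    · exact ⟨mOf R i, Or.inl (mOf_mem h)⟩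
    · exact ⟨g i, Or.inr ⟨i, ⟨hi, h⟩, rfl⟩⟩

/-- `R` covers the element `z` of `A ⊕ B`. -/
def covers (R : Set (I × J)) : A ⊕ B → Prop
  | .inl a => a ∈ spanD bI R
  | .inr b => b ∈ spanD bJ (swap R)

lemma exists_ext_sum [Nonempty I] [Nonempty J] [Uncountable I] [Uncountable J]
    {R : Set (I × J)} (hR : Matching R) (hc : R.Countable) (z : A ⊕ B) :
    ∃ R', R ⊆ R' ∧ Matching R' ∧ R'.Countable ∧ covers bI bJ R' z := by
  cases z with
  | inl a => exact exists_ext bI hR hc a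
  | inr b =>
    obtain ⟨S, hsub, hm, hcnt, hmem⟩ := exists_ext bJ hR.swap (swap_countable hc) b
    exact ⟨swap S, fun p hp => hsub hp, hm.swap, swap_countable hcnt, hmem⟩

end EFM

namespace EFM

section Game

variable {I : Type u} {J : Type v} {A : Type u} {B : Type v}
  [AddCommGroup A] [AddCommGroup B]
  [Nonempty I] [Nonempty J] [Uncountable I] [Uncountable J]
  (bI : Module.Basis I ℤ A) (bJ : Module.Basis J ℤ B)

noncomputable def extC (z : A ⊕ B) (R : Set (I × J)) : Set (I × J) :=
  letI := Classical.propDecidable (Matching R ∧ R.Countable)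
  if h : Matching R ∧ R.Countable then (exists_ext_sum bI bJ h.1 h.2 z).choose else R

lemma subset_extC (z : A ⊕ B) (R : Set (I × J)) : R ⊆ extC bI bJ z R := by
  unfold extC
  split_ifs with h
  · exact (exists_ext_sum bI bJ h.1 h.2 z).choose_spec.1
  · exact subset_rfl

lemma extC_spec {R : Set (I × J)} (hm : Matching R) (hc : R.Countable) (z : A ⊕ B) :
    Matching (extC bI bJ z R) ∧ (extC bI bJ z R).Countable ∧ covers bI bJ (extC bI bJ z R) z := by
  unfold extC
  rw [dif_pos ⟨hm, hc⟩]
  obtain ⟨_, h2, h3, h4⟩ := (exists_ext_sum bI bJ hm hc z).choose_spec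
  exact ⟨h2, h3, h4⟩

noncomputable def stepM (pl : Ordinal.{0} → (A ⊕ B) × (A ⊕ B)) : Ordinal.{0} → Set (I × J) :=
  WellFounded.fix Ordinal.lt_wf
    (fun β rec => extC bI bJ (pl β).1 (⋃ γ : {γ : Ordinal.{0} // γ < β}, rec γ.1 γ.2))

noncomputable def Mstage (pl : Ordinal.{0} → (A ⊕ B) × (A ⊕ B)) (β : Ordinal.{0}) :
    Set (I × J) :=
  ⋃ γ : {γ : Ordinal.{0} // γ < β}, stepM bI bJ pl γ.1

lemma stepM_def (pl : Ordinal.{0} → (A ⊕ B) × (A ⊕ B)) (β : Ordinal.{0}) :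
    stepM bI bJ pl β = extC bI bJ (pl β).1 (Mstage bI bJ pl β) := by
  unfold stepM Mstage
  rw [WellFounded.fix_eq]
  rfl

lemma stepM_subset_Mstage {pl : Ordinal.{0} → (A ⊕ B) × (A ⊕ B)} {γ β : Ordinal.{0}}
    (h : γ < β) : stepM bI bJ pl γ ⊆ Mstage bI bJ pl β :=
  Set.subset_iUnion (fun δ : {δ : Ordinal.{0} // δ < β} => stepM bI bJ pl δ.1) ⟨γ, h⟩

lemma Mstage_subset_stepM (pl : Ordinal.{0} → (A ⊕ B) × (A ⊕ B)) (β : Ordinal.{0}) :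
    Mstage bI bJ pl β ⊆ stepM bI bJ pl β := by
  rw [stepM_def]
  exact subset_extC bI bJ _ _

lemma stepM_mono {pl : Ordinal.{0} → (A ⊕ B) × (A ⊕ B)} {γ β : Ordinal.{0}} (h : γ ≤ β) :
    stepM bI bJ pl γ ⊆ stepM bI bJ pl β := by
  rcases eq_or_lt_of_le h with rfl | h
  · exact subset_rfl
  · exact (stepM_subset_Mstage bI bJ h).trans (Mstage_subset_stepM bI bJ _ _)

lemma countable_Iio {β : Ordinal.{0}} (h : β < omega1) :
    Countable {γ : Ordinal.{0} // γ < β} := by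
  have h2 : β.card < Cardinal.aleph 1 := Cardinal.lt_ord.mp h
  have h3 : Cardinal.mk (Set.Iio β) < Cardinal.aleph 1 := by
    rw [Ordinal.mk_Iio_ordinal]
    exact Cardinal.lift_lt_aleph_one.mpr h2
  exact ((Cardinal.countable_iff_lt_aleph_one _).mpr h3).to_subtype

lemma stepM_good {pl : Ordinal.{0} → (A ⊕ B) × (A ⊕ B)} :
    ∀ β, β < omega1 → Matching (stepM bI bJ pl β) ∧ (stepM bI bJ pl β).Countable := by
  intro β
  induction β using Ordinal.induction with
  | h β IH =>
    intro hβ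
    have hMm : Matching (Mstage bI bJ pl β) := by
      apply Matching.mono_union
      · rintro ⟨γ1, h1⟩ ⟨γ2, h2⟩
        exact ⟨⟨max γ1 γ2, max_lt h1 h2⟩, stepM_mono bI bJ (le_max_left _ _),
          stepM_mono bI bJ (le_max_right _ _)⟩
      · rintro ⟨γ, hγ⟩
        exact (IH γ hγ (hγ.trans hβ)).1
    have hMc : (Mstage bI bJ pl β).Countable := by
      haveI := countable_Iio hβ
      exact Set.countable_iUnion fun γ => (IH γ.1 γ.2 (γ.2.trans hβ)).2
    rw [stepM_def]
    have hspec := extC_spec bI bJ hMm hMc (pl β).1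
    exact ⟨hspec.1, hspec.2.1⟩

lemma Mstage_matching (pl : Ordinal.{0} → (A ⊕ B) × (A ⊕ B)) {β : Ordinal.{0}}
    (hβ : β ≤ omega1) : Matching (Mstage bI bJ pl β) := by
  apply Matching.mono_union
  · rintro ⟨γ1, h1⟩ ⟨γ2, h2⟩
    exact ⟨⟨max γ1 γ2, max_lt h1 h2⟩, stepM_mono bI bJ (le_max_left _ _),
      stepM_mono bI bJ (le_max_right _ _)⟩
  · rintro ⟨γ, hγ⟩
    exact (stepM_good bI bJ γ (lt_of_lt_of_le hγ hβ)).1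

lemma Mstage_countable (pl : Ordinal.{0} → (A ⊕ B) × (A ⊕ B)) {β : Ordinal.{0}}
    (hβ : β < omega1) : (Mstage bI bJ pl β).Countable := by
  haveI := countable_Iio hβ
  exact Set.countable_iUnion fun γ => (stepM_good bI bJ γ.1 (γ.2.trans hβ)).2

lemma stepM_congr {pl pl' : Ordinal.{0} → (A ⊕ B) × (A ⊕ B)} :
    ∀ γ : Ordinal.{0}, (∀ i ≤ γ, pl i = pl' i) → stepM bI bJ pl γ = stepM bI bJ pl' γ := by
  intro γ
  induction γ using Ordinal.induction with
  | h γ IH =>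
    intro hag
    rw [stepM_def, stepM_def, hag γ le_rfl]
    have : Mstage bI bJ pl γ = Mstage bI bJ pl' γ :=
      Set.iUnion_congr fun δ => IH δ.1 δ.2 fun i hi => hag i (hi.trans δ.2.le)
    rw [this]

lemma Mstage_congr {pl pl' : Ordinal.{0} → (A ⊕ B) × (A ⊕ B)} (β : Ordinal.{0})
    (h : ∀ i < β, pl i = pl' i) : Mstage bI bJ pl β = Mstage bI bJ pl' β :=
  Set.iUnion_congr fun γ => stepM_congr bI bJ γ.1 fun i hi => h i (lt_of_le_of_lt hi γ.2)

/-- The set of pairs linked by the matching `S`. -/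
def Lk (S : Set (I × J)) : Set (A × B) :=
  {p | p.1 ∈ spanD bI S ∧ phi bI bJ S p.1 = p.2}

omit [Uncountable I] [Uncountable J] in
lemma isPartialIso_of_subset_Lk {S : Set (I × J)} (hS : Matching S) {π : Set (A × B)}
    (hπ : π ⊆ Lk bI bJ S) :
    IsPartialIso addLang (addStructure A) (addStructure B) π := by
  have key : ∀ x ∈ spanD bI S, ∀ y ∈ spanD bI S, phi bI bJ S x = phi bI bJ S y → x = y := by
    intro x hx y hy hxy
    have h1 := phi_phi bI bJ hS hx
    rw [hxy, phi_phi bI bJ hS hy] at h1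
    exact h1.symm
  constructor
  · intro p hp q hq
    obtain ⟨hp1, hp2⟩ := hπ hp
    obtain ⟨hq1, hq2⟩ := hπ hq
    constructor
    · intro h; rw [← hp2, ← hq2, h]
    · intro h; exact key _ hp1 _ hq1 (by rw [hp2, hq2, h])
  · intro n r a b hab
    have hn := r.down
    subst hn
    have ha0 : a 0 ∈ spanD bI S := (hπ (hab 0)).1
    have hb0 : phi bI bJ S (a 0) = b 0 := (hπ (hab 0)).2
    have ha1 : a 1 ∈ spanD bI S := (hπ (hab 1)).1
    have hb1 : phi bI bJ S (a 1) = b 1 := (hπ (hab 1)).2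
    have ha2 : a 2 ∈ spanD bI S := (hπ (hab 2)).1
    have hb2 : phi bI bJ S (a 2) = b 2 := (hπ (hab 2)).2
    show a 0 + a 1 = a 2 ↔ b 0 + b 1 = b 2
    constructor
    · intro h
      rw [← hb0, ← hb1, ← hb2, ← map_add, h]
    · intro h
      apply key _ (add_mem ha0 ha1) _ ha2
      rw [map_add, hb0, hb1, hb2]
      exact h

/-- The strategy of player ∃. -/
noncomputable def strat (pl : Ordinal.{0} → (A ⊕ B) × (A ⊕ B)) (β : Ordinal.{0}) :
    A ⊕ B → A ⊕ B
  | .inl a => .inr (phi bI bJ (extC bI bJ (.inl a) (Mstage bI bJ pl β)) a)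
  | .inr b => .inl (phi bJ bI (swap (extC bI bJ (.inr b) (Mstage bI bJ pl β))) b)

lemma strat_inl (pl : Ordinal.{0} → (A ⊕ B) × (A ⊕ B)) (β : Ordinal.{0}) (a : A) :
    strat bI bJ pl β (.inl a) =
      .inr (phi bI bJ (extC bI bJ (.inl a) (Mstage bI bJ pl β)) a) := rfl

lemma strat_inr (pl : Ordinal.{0} → (A ⊕ B) × (A ⊕ B)) (β : Ordinal.{0}) (b : B) :
    strat bI bJ pl β (.inr b) =
      .inl (phi bJ bI (swap (extC bI bJ (.inr b) (Mstage bI bJ pl β))) b) := rfl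

omit bI bJ in
theorem existsWins (bI : Module.Basis I ℤ A) (bJ : Module.Basis J ℤ B) :
    ExistsWinsEF addLang (addStructure A) (addStructure B) omega1 := by
  refine ⟨fun β pl x => strat bI bJ pl β x, ?_, ?_⟩
  · intro β pl pl' x h
    have hM : Mstage bI bJ pl β = Mstage bI bJ pl' β := Mstage_congr bI bJ β h
    show strat bI bJ pl β x = strat bI bJ pl' β x
    cases x with
    | inl a => rw [strat_inl, strat_inl, hM]
    | inr b => rw [strat_inr, strat_inr, hM]
  · intro pl hfollow
    have hMtotM : Matching (Mstage bI bJ pl omega1) := Mstage_matching bI bJ pl le_rfl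
    have hrounds : ∀ β, β < omega1 →
        pairRel (pl β).1 (pl β).2 ⊆ Lk bI bJ (Mstage bI bJ pl omega1) := by
      intro β hβ
      have hMm : Matching (Mstage bI bJ pl β) := Mstage_matching bI bJ pl hβ.le
      have hMc : (Mstage bI bJ pl β).Countable := Mstage_countable bI bJ pl hβ
      have hfol : (pl β).2 = strat bI bJ pl β (pl β).1 := hfollow β hβ
      have hRsub : stepM bI bJ pl β ⊆ Mstage bI bJ pl omega1 := stepM_subset_Mstage bI bJ hβ
      cases hx : (pl β).1 with
      | inl a =>
        have hspec := extC_spec bI bJ hMm hMc (Sum.inl a)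
        have hRstep : extC bI bJ (Sum.inl a) (Mstage bI bJ pl β) = stepM bI bJ pl β := by
          rw [stepM_def, hx]
        rw [hx, strat_inl] at hfol
        intro p hp
        rcases hp with ⟨h1, h2⟩ | ⟨h1, h2⟩
        · have hap : a = p.1 := Sum.inl.inj h1
          have hbp : p.2 = phi bI bJ (extC bI bJ (Sum.inl a) (Mstage bI bJ pl β)) a :=
            Sum.inr.inj (h2.symm.trans hfol)
          have hcov : a ∈ spanD bI (stepM bI bJ pl β) := by
            have hc := hspec.2.2
            rw [hRstep] at hc
            exact hc
          rw [hRstep] at hbp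
          subst hap
          refine ⟨spanD_mono bI hRsub hcov, ?_⟩
          rw [hbp, ← phi_mono bI bJ hMtotM hRsub hcov]
        · exact absurd h1 Sum.inl_ne_inr
      | inr b =>
        have hspec := extC_spec bI bJ hMm hMc (Sum.inr b)
        have hRstep : extC bI bJ (Sum.inr b) (Mstage bI bJ pl β) = stepM bI bJ pl β := by
          rw [stepM_def, hx]
        rw [hx, strat_inr] at hfol
        intro p hp
        rcases hp with ⟨h1, h2⟩ | ⟨h1, h2⟩
        · exact absurd h1.symm Sum.inl_ne_inr
        · have hbp : b = p.2 := Sum.inr.inj h1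
          have hap : p.1 = phi bJ bI (swap (extC bI bJ (Sum.inr b) (Mstage bI bJ pl β))) b :=
            Sum.inl.inj (h2.symm.trans hfol)
          have hcov : b ∈ spanD bJ (swap (stepM bI bJ pl β)) := by
            have hc := hspec.2.2
            rw [hRstep] at hc
            exact hc
          have hmem : phi bJ bI (swap (stepM bI bJ pl β)) b ∈ spanD bI (stepM bI bJ pl β) := by
            have := phi_mem_span bJ bI hcov
            rwa [swap_swap] at this
          have hstepm : Matching (stepM bI bJ pl β) := (stepM_good bI bJ β hβ).1
          rw [hRstep] at hap
          subst hbp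
          refine ⟨?_, ?_⟩
          · rw [hap]
            exact spanD_mono bI hRsub hmem
          · rw [hap, ← phi_mono bI bJ hMtotM hRsub hmem]
            have hpp := phi_phi bJ bI hstepm.swap hcov
            rwa [swap_swap] at hpp
    constructor
    · intro β hβ
      have hfol : (pl β).2 = strat bI bJ pl β (pl β).1 := hfollow β hβ
      cases hx : (pl β).1 with
      | inl a =>
        rw [hx, strat_inl] at hfol
        rw [hfol]
        exact trivial
      | inr b =>
        rw [hx, strat_inr] at hfol
        rw [hfol]
        exact trivial
    · apply isPartialIso_of_subset_Lk bI bJ hMtotM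
      intro p hp
      obtain ⟨β, hmem⟩ := Set.mem_iUnion.mp hp
      obtain ⟨hβ, hp'⟩ := Set.mem_iUnion.mp hmem
      exact hrounds β hβ hp'

end Game

lemma uncountable_index {A : Type u} [AddCommGroup A] [Uncountable A] {I : Type u}
    (b : Module.Basis I ℤ A) : Uncountable I := by
  by_contra h
  rw [not_uncountable_iff] at h
  haveI := h
  haveI : Countable (I →₀ ℤ) := inferInstance
  have : Countable A := Countable.of_equiv _ b.repr.toEquiv.symm
  exact not_countable this

end EFM
/-- If `G` is a free abelian group of uncountable cardinality then player ∃
has a winning strategy in `G_{ω₁}(F(ω₁), G)`. -/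
theorem existsWins_of_free_uncountable (G : Type u) [AddCommGroup G] [Uncountable G]
    (hfree : FreeAbelian G) :
    ExistsWinsG Fomega1 G omega1 := by
  haveI : Module.Free ℤ G := hfree
  let bJ := Module.Free.chooseBasis ℤ G
  haveI : Uncountable omega1.ToType := by
    rw [← Cardinal.aleph0_lt_mk_iff, Cardinal.mk_toType]
    show Cardinal.aleph0 < omega1.card
    rw [omega1, Cardinal.card_ord]
    exact Cardinal.aleph0_lt_aleph_one
  haveI : Uncountable (Module.Free.ChooseBasisIndex ℤ G) := EFM.uncountable_index bJ
  exact EFM.existsWins (FreeAbelianGroup.basis omega1.ToType) bJ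
end

section
/- Let 𝒜 and ℬ be structures in the same relational vocabulary, both with universe ω₂. If player ∀ does not have a winning strategy in the game EF_{ω₁}(𝒜,ℬ), then the set S = {α < ω₂ : 𝒜↾α ≅ ℬ↾α} is ω₁-stationary in ω₂, where 𝒜↾α denotes the substructure of 𝒜 whose universe is the set of ordinals below α. -/
universe u v w x t

open FirstOrder

namespace EFAux

open Cardinal Set

lemma aleph0_le_a1 : Cardinal.aleph0 ≤ Cardinal.aleph 1 := Cardinal.aleph0_le_aleph 1

lemma isLimit_omega1 : Order.IsSuccLimit omega1 := Cardinal.isSuccLimit_ord aleph0_le_a1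

lemma isLimit_omega2 : Order.IsSuccLimit omega2 := Cardinal.isSuccLimit_ord (Cardinal.aleph0_le_aleph 2)

lemma omega1_pos : 0 < omega1 := isLimit_omega1.pos
lemma omega2_pos : 0 < omega2 := isLimit_omega2.pos

lemma card_omega1 : omega1.card = Cardinal.aleph 1 := Cardinal.card_ord _
lemma card_omega2 : omega2.card = Cardinal.aleph 2 := Cardinal.card_ord _

lemma a1_lt_a2 : Cardinal.aleph 1 < Cardinal.aleph 2 := by
  rw [Cardinal.aleph_lt_aleph]; exact one_lt_two

lemma aleph2_eq_succ : Cardinal.aleph 2 = Order.succ (Cardinal.aleph 1) := by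
  have : (2 : Ordinal) = Order.succ 1 := by
    rw [Order.succ_eq_add_one, one_add_one_eq_two]
  rw [this, Cardinal.aleph_succ]

lemma cof_omega2 : omega2.cof = Cardinal.aleph 2 := by
  have h2 : (2 : Ordinal) = Order.succ 1 := by
    rw [Order.succ_eq_add_one, one_add_one_eq_two]
  have := Cardinal.isRegular_aleph_succ (1 : Ordinal)
  rw [← h2] at this
  exact this.cof_eq

lemma card_lt_of_lt_omega1 {β : Ordinal} (h : β < omega1) : β.card < Cardinal.aleph 1 :=
  Cardinal.lt_ord.1 h

lemma add_one_lt_omega1 {β : Ordinal} (h : β < omega1) : β + 1 < omega1 := by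
  rw [Ordinal.add_one_eq_succ]
  exact isLimit_omega1.succ_lt h

end EFAux

namespace EFAux

open Cardinal Set

abbrev Elt : Type 1 := ↥(Set.Iio omega2)
abbrev Move : Type 1 := Elt ⊕ Elt

def ordOf : Move → Ordinal := Sum.elim Subtype.val Subtype.val

lemma ordOf_lt_omega2 (m : Move) : ordOf m < omega2 := by
  cases m with
  | inl a => exact a.2
  | inr a => exact a.2

/-- the defining set for the `β`-th element of the guiding sequence -/
noncomputable def cseq (C : Set Ordinal.{0}) (pl : Ordinal.{0} → Move × Move) :
    Ordinal.{0} → Ordinal.{0} :=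
  fun β => sInf {x | x ∈ C ∧ ∀ i < β,
    cseq C pl i < x ∧ ordOf (pl i).1 < x ∧ ordOf (pl i).2 < x}
termination_by β => β

lemma cseq_eq (C : Set Ordinal.{0}) (pl : Ordinal.{0} → Move × Move) (β : Ordinal.{0}) :
    cseq C pl β = sInf {x | x ∈ C ∧ ∀ i < β,
      cseq C pl i < x ∧ ordOf (pl i).1 < x ∧ ordOf (pl i).2 < x} := by
  rw [cseq]

variable {C : Set Ordinal.{0}} {pl : Ordinal.{0} → Move × Move}

lemma cseq_spec (hsub : C ⊆ Set.Iio omega2) (hunb : ∀ β < omega2, ∃ x ∈ C, β ≤ x) :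
    ∀ β < omega1, cseq C pl β ∈ C ∧ ∀ i < β,
      cseq C pl i < cseq C pl β ∧ ordOf (pl i).1 < cseq C pl β ∧
        ordOf (pl i).2 < cseq C pl β := by
  intro β
  induction β using Ordinal.induction with
  | h β IH =>
    intro hβ
    have hne : {x | x ∈ C ∧ ∀ i < β,
        cseq C pl i < x ∧ ordOf (pl i).1 < x ∧ ordOf (pl i).2 < x}.Nonempty := by
      set g : ∀ i < β, Ordinal.{0} := fun i _ =>
        (max (cseq C pl i) (max (ordOf (pl i).1) (ordOf (pl i).2))) + 1 with hg
      have hblt : Ordinal.bsup β g < omega2 := by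
        apply Ordinal.bsup_lt_ord
        · rw [cof_omega2]
          exact (card_lt_of_lt_omega1 hβ).trans a1_lt_a2
        · intro i hi
          have h1 : cseq C pl i < omega2 := hsub ((IH i hi (hi.trans hβ)).1)
          have h2 := ordOf_lt_omega2 (pl i).1
          have h3 := ordOf_lt_omega2 (pl i).2
          have : max (cseq C pl i) (max (ordOf (pl i).1) (ordOf (pl i).2)) < omega2 := by
            simp [h1, h2, h3]
          have := isLimit_omega2.succ_lt this
          rw [hg]
          dsimp only
          rwa [Ordinal.add_one_eq_succ]
      obtain ⟨x, hxC, hbx⟩ := hunb _ hblt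
      refine ⟨x, hxC, fun i hi => ?_⟩
      have hle : g i hi ≤ x := (Ordinal.le_bsup g i hi).trans hbx
      have h1 : max (cseq C pl i) (max (ordOf (pl i).1) (ordOf (pl i).2)) < x := by
        refine lt_of_lt_of_le ?_ hle
        rw [hg]
        dsimp only
        rw [Ordinal.add_one_eq_succ]
        exact Order.lt_succ _
      refine ⟨?_, ?_, ?_⟩
      · exact (le_max_left _ _).trans_lt h1
      · exact ((le_max_left _ _).trans (le_max_right _ _)).trans_lt h1
      · exact ((le_max_right _ _).trans (le_max_right _ _)).trans_lt h1
    have hmem := csInf_mem hne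
    rw [← cseq_eq] at hmem
    exact hmem

lemma cseq_congr {pl' : Ordinal.{0} → Move × Move} {β : Ordinal.{0}}
    (hag : ∀ i < β, pl i = pl' i) : ∀ γ ≤ β, cseq C pl γ = cseq C pl' γ := by
  intro γ
  induction γ using Ordinal.induction with
  | h γ IH =>
    intro hγ
    rw [cseq_eq, cseq_eq]
    congr 1
    ext x
    simp only [Set.mem_setOf_eq, and_congr_right_iff]
    intro _
    constructor <;> intro hx i hi
    · rw [← IH i hi ((le_of_lt hi).trans hγ), ← hag i (hi.trans_le hγ)]
      exact hx i hi
    · rw [IH i hi ((le_of_lt hi).trans hγ), hag i (hi.trans_le hγ)]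
      exact hx i hi

end EFAux

namespace EFAux

open Cardinal Set

lemma exists_enum {c : Ordinal.{0}} (hc : c < omega2) (h0 : 0 < c) :
    ∃ g : Ordinal.{0} → Ordinal.{0}, (∀ x, g x < c) ∧ ∀ ξ < c, ∃ x < omega1, g x = ξ := by
  have hcard : #(Set.Iio c) ≤ #(Set.Iio omega1) := by
    rw [Ordinal.mk_Iio_ordinal, Ordinal.mk_Iio_ordinal, Cardinal.lift_le, card_omega1]
    have h1 : c.card < Cardinal.aleph 2 := Cardinal.lt_ord.1 hc
    rw [aleph2_eq_succ, Order.lt_succ_iff] at h1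
    exact h1
  obtain ⟨f⟩ := (Cardinal.le_def _ _).1 hcard
  have hne : Nonempty (Set.Iio c) := ⟨⟨0, h0⟩⟩
  let g0 : Set.Iio omega1 → Set.Iio c := Function.invFun f
  have hg0 : Function.Surjective g0 := Function.invFun_surjective f.injective
  refine ⟨fun x => if hx : x < omega1 then (g0 ⟨x, hx⟩ : Ordinal) else 0, ?_, ?_⟩
  · intro x
    dsimp only
    by_cases hx : x < omega1
    · rw [dif_pos hx]; exact (g0 ⟨x, hx⟩).2
    · rw [dif_neg hx]; exact h0
  · intro ξ hξ
    obtain ⟨a, ha⟩ := hg0 ⟨ξ, hξ⟩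
    refine ⟨a.1, a.2, ?_⟩
    dsimp only
    rw [dif_pos (show (a : Ordinal) < omega1 from a.2), Subtype.coe_eta, ha]

noncomputable def eFun (c : Ordinal.{0}) : Ordinal.{0} → Ordinal.{0} :=
  if h : c < omega2 ∧ 0 < c then Classical.choose (exists_enum h.1 h.2) else fun _ => 0

lemma eFun_lt {c : Ordinal.{0}} (hc : c < omega2) (h0 : 0 < c) (x : Ordinal.{0}) :
    eFun c x < c := by
  rw [eFun, dif_pos ⟨hc, h0⟩]
  exact (Classical.choose_spec (exists_enum hc h0)).1 x

lemma eFun_lt_omega2 (c x : Ordinal.{0}) : eFun c x < omega2 := by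
  rw [eFun]
  by_cases h : c < omega2 ∧ 0 < c
  · rw [dif_pos h]
    exact ((Classical.choose_spec (exists_enum h.1 h.2)).1 x).trans h.1
  · rw [dif_neg h]; exact omega2_pos

lemma eFun_surj {c : Ordinal.{0}} (hc : c < omega2) {ξ : Ordinal.{0}} (hξ : ξ < c) :
    ∃ x < omega1, eFun c x = ξ := by
  have h0 : 0 < c := (zero_le : (0 : Ordinal) ≤ ξ).trans_lt hξ
  rw [eFun, dif_pos ⟨hc, h0⟩]
  exact (Classical.choose_spec (exists_enum hc h0)).2 ξ hξ

section jfun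

abbrev A1 : Type 1 := ↥(Set.Iio omega1)

lemma mk_A1 : #A1 = Cardinal.lift.{1, 0} (Cardinal.aleph 1) := by
  rw [Ordinal.mk_Iio_ordinal, card_omega1]

lemma aleph0_le_mkA1 : Cardinal.aleph0 ≤ #A1 := by
  rw [mk_A1]
  have : Cardinal.lift.{1, 0} Cardinal.aleph0 ≤ Cardinal.lift.{1, 0} (Cardinal.aleph 1) :=
    Cardinal.lift_le.2 aleph0_le_a1
  simpa using this

lemma mk_A1A1 : #(A1 × A1) = #A1 := by
  have := Cardinal.mul_eq_self aleph0_le_mkA1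
  simpa [Cardinal.mk_prod] using this

lemma mk_A1Bool : #(A1 × Bool) = #A1 := by
  have h2 : (2 : Cardinal.{1}) ≤ Cardinal.aleph0 := by
    have := (Cardinal.nat_lt_aleph0.{1} 2).le
    simpa using this
  have := Cardinal.mul_eq_left aleph0_le_mkA1 (h2.trans aleph0_le_mkA1)
    (two_ne_zero)
  simpa [Cardinal.mk_prod, Cardinal.mk_bool] using this

noncomputable def bigEquiv : A1 ≃ A1 × (A1 × (A1 × Bool)) := by
  have e1 : A1 × A1 ≃ A1 := Classical.choice (Cardinal.eq.1 mk_A1A1)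
  have e2 : A1 × Bool ≃ A1 := Classical.choice (Cardinal.eq.1 mk_A1Bool)
  exact e1.symm.trans ((Equiv.refl A1).prodCongr
    (e1.symm.trans ((Equiv.refl A1).prodCongr e2.symm)))

noncomputable def jfun (β : Ordinal.{0}) : Ordinal.{0} × Ordinal.{0} × Bool :=
  if h : β < omega1 then
    ((((bigEquiv ⟨β, h⟩).2.1 : Ordinal)), ((bigEquiv ⟨β, h⟩).2.2.1 : Ordinal),
      (bigEquiv ⟨β, h⟩).2.2.2)
  else (0, 0, true)

lemma jfun_spec {β₁ β₂ : Ordinal.{0}} (h1 : β₁ < omega1) (h2 : β₂ < omega1) (s : Bool) :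
    ∃ β < omega1, β₁ ≤ β ∧ jfun β = (β₁, β₂, s) := by
  set F : A1 → Ordinal.{0} := fun a =>
    (bigEquiv.symm (a, ⟨β₁, h1⟩, ⟨β₂, h2⟩, s) : A1).1 with hF
  have hFlt : ∀ a, F a < omega1 := fun a => (bigEquiv.symm (a, ⟨β₁, h1⟩, ⟨β₂, h2⟩, s)).2
  have hFj : ∀ a, jfun (F a) = (β₁, β₂, s) := by
    intro a
    rw [jfun, dif_pos (hFlt a)]
    have : (⟨F a, hFlt a⟩ : A1) = bigEquiv.symm (a, ⟨β₁, h1⟩, ⟨β₂, h2⟩, s) :=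
      Subtype.ext rfl
    rw [this, Equiv.apply_symm_apply]
  have hex : ∃ a, β₁ ≤ F a := by
    by_contra hcon
    push_neg at hcon
    have hinj : Function.Injective (fun a : A1 => (⟨F a, hcon a⟩ : ↥(Set.Iio β₁))) := by
      intro a b hab
      have h3 : F a = F b := by
        exact congrArg (fun z : ↥(Set.Iio β₁) => (z : Ordinal)) hab
      have h4 : (bigEquiv.symm (a, ⟨β₁, h1⟩, ⟨β₂, h2⟩, s) : A1)
          = bigEquiv.symm (b, ⟨β₁, h1⟩, ⟨β₂, h2⟩, s) := Subtype.ext h3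
      have h5 := congrArg bigEquiv h4
      rw [Equiv.apply_symm_apply, Equiv.apply_symm_apply] at h5
      exact (Prod.ext_iff.1 h5).1
    have hle := Cardinal.mk_le_of_injective hinj
    rw [mk_A1, Ordinal.mk_Iio_ordinal] at hle
    have hlt : Cardinal.lift.{1} β₁.card < Cardinal.lift.{1} (Cardinal.aleph 1) :=
      Cardinal.lift_lt.2 (card_lt_of_lt_omega1 h1)
    exact absurd (hle.trans_lt hlt) (lt_irrefl _)
  obtain ⟨a, ha⟩ := hex
  exact ⟨F a, hFlt a, ha, hFj a⟩

end jfun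

end EFAux

namespace EFAux

open Cardinal Set

noncomputable def stratOrd (C : Set Ordinal.{0}) (pl : Ordinal.{0} → Move × Move)
    (β : Ordinal.{0}) : Ordinal.{0} :=
  if (jfun β).1 ≤ β then eFun (cseq C pl (jfun β).1) (jfun β).2.1 else 0

lemma stratOrd_lt_omega2 (C : Set Ordinal.{0}) (pl : Ordinal.{0} → Move × Move)
    (β : Ordinal.{0}) : stratOrd C pl β < omega2 := by
  rw [stratOrd]
  by_cases h : (jfun β).1 ≤ β
  · rw [if_pos h]; exact eFun_lt_omega2 _ _
  · rw [if_neg h]; exact omega2_pos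

noncomputable def strat (C : Set Ordinal.{0}) (β : Ordinal.{0})
    (pl : Ordinal.{0} → Move × Move) : Move :=
  if (jfun β).2.2 then Sum.inl ⟨stratOrd C pl β, stratOrd_lt_omega2 C pl β⟩
  else Sum.inr ⟨stratOrd C pl β, stratOrd_lt_omega2 C pl β⟩

lemma strat_congr (C : Set Ordinal.{0}) (β : Ordinal.{0})
    {pl pl' : Ordinal.{0} → Move × Move} (hag : ∀ i < β, pl i = pl' i) :
    strat C β pl = strat C β pl' := by
  have hord : stratOrd C pl β = stratOrd C pl' β := by
    rw [stratOrd, stratOrd]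
    by_cases h : (jfun β).1 ≤ β
    · rw [if_pos h, if_pos h, cseq_congr hag _ h]
    · rw [if_neg h, if_neg h]
  rw [strat, strat]
  by_cases h : (jfun β).2.2
  · rw [if_pos h, if_pos h]
    exact congrArg _ (Subtype.ext hord)
  · rw [if_neg h, if_neg h]
    exact congrArg _ (Subtype.ext hord)

lemma strat_spec {C : Set Ordinal.{0}} {pl : Ordinal.{0} → Move × Move}
    {β β₁ β₂ : Ordinal.{0}} {s : Bool} (hj : jfun β = (β₁, β₂, s)) (hle : β₁ ≤ β) :
    strat C β pl =
      (if s then Sum.inl (⟨eFun (cseq C pl β₁) β₂, eFun_lt_omega2 _ _⟩ : Elt)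
       else Sum.inr (⟨eFun (cseq C pl β₁) β₂, eFun_lt_omega2 _ _⟩ : Elt)) := by
  have hord : stratOrd C pl β = eFun (cseq C pl β₁) β₂ := by
    rw [stratOrd, hj, if_pos hle]
  rw [strat, hj]
  cases s with
  | true => simp only [if_true]; exact congrArg Sum.inl (Subtype.ext hord)
  | false =>
    simp only [Bool.false_eq_true, if_false]
    exact congrArg Sum.inr (Subtype.ext hord)

end EFAux

open EFAux in
/-- If `𝒜` and `ℬ` are structures with universe `ω₂` in a common relational
vocabulary and `∀` has no winning strategy in `EF_{ω₁}(𝒜, ℬ)`, then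
`{α < ω₂ : 𝒜↾α ≅ ℬ↾α}` is `ω₁`-stationary in `ω₂`. -/
theorem omega1Stationary_iso_levels (L : FirstOrder.Language.{u, v}) [L.IsRelational]
    (SA SB : L.Structure ↥(Set.Iio omega2))
    (h : ¬ ForallWinsEF L SA SB omega1) :
    Omega1Stationary {α | α < omega2 ∧
      StructIso L (restrictStructure L SA {x : ↥(Set.Iio omega2) | (x : Ordinal) < α})
        (restrictStructure L SB {x : ↥(Set.Iio omega2) | (x : Ordinal) < α})} := by
  intro C hsub hclosed hunb
  by_contra hS
  apply h
  refine ⟨strat C, fun β pl pl' hag => strat_congr C β hag, ?_⟩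
  intro pl hpl hwin
  obtain ⟨hopp, hfunc, hrel⟩ := hwin
  set α := sSup (cseq C pl '' Set.Iio omega1) with hαdef
  have spec := cseq_spec (C := C) (pl := pl) hsub hunb
  have hcseqlt : ∀ β < omega1, cseq C pl β < omega2 := fun β hβ => hsub (spec β hβ).1
  have himg_ne : (cseq C pl '' Set.Iio omega1).Nonempty := ⟨_, ⟨0, omega1_pos, rfl⟩⟩
  have hbdd : BddAbove (cseq C pl '' Set.Iio omega1) := Ordinal.bddAbove_of_small
  have hαC : α ∈ C := hclosed (cseq C pl)
    (fun i _ j hj hij => ((spec j hj).2 i hij).1) (fun i hi => (spec i hi).1)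
  have hcseq_le : ∀ β < omega1, cseq C pl β ≤ α :=
    fun β hβ => le_csSup hbdd ⟨β, hβ, rfl⟩
  have hαω₂ : α < omega2 := by
    have hb : Ordinal.bsup omega1 (fun i _ => cseq C pl i) < omega2 :=
      Ordinal.bsup_lt_ord (by rw [card_omega1, cof_omega2]; exact a1_lt_a2)
        (fun i hi => hcseqlt i hi)
    refine lt_of_le_of_lt (csSup_le himg_ne ?_) hb
    rintro y ⟨i, hi, rfl⟩
    exact Ordinal.le_bsup _ i hi
  have hcoord : ∀ β < omega1, ordOf (pl β).1 < α ∧ ordOf (pl β).2 < α := by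
    intro β hβ
    have hβ1 : β + 1 < omega1 := add_one_lt_omega1 hβ
    have hlt : β < β + 1 := by
      rw [Ordinal.add_one_eq_succ]; exact Order.lt_succ β
    have hc := (spec _ hβ1).2 β hlt
    exact ⟨hc.2.1.trans_le (hcseq_le _ hβ1), hc.2.2.trans_le (hcseq_le _ hβ1)⟩
  have hcover : ∀ ξ, ∀ hξ : ξ < α, ∀ s : Bool, ∃ β < omega1,
      (pl β).1 = (if s then Sum.inl (⟨ξ, hξ.trans hαω₂⟩ : Elt)
        else Sum.inr (⟨ξ, hξ.trans hαω₂⟩ : Elt)) := by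
    intro ξ hξ s
    obtain ⟨y, hy1, hy2⟩ := (lt_csSup_iff hbdd himg_ne).1 hξ
    obtain ⟨β₁, hβ₁, rfl⟩ := hy1
    obtain ⟨β₂, hβ₂, heq⟩ := eFun_surj (hcseqlt β₁ hβ₁) hy2
    obtain ⟨β, hβ, hβ₁β, hj⟩ := jfun_spec hβ₁ hβ₂ s
    refine ⟨β, hβ, ?_⟩
    rw [hpl β hβ, strat_spec hj hβ₁β]
    cases s with
    | true => simp only [if_true]; exact congrArg Sum.inl (Subtype.ext heq)
    | false =>
      simp only [Bool.false_eq_true, if_false]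
      exact congrArg Sum.inr (Subtype.ext heq)
  have hexA : ∀ a : Elt, (a : Ordinal) < α →
      ∃ b : Elt, (b : Ordinal) < α ∧ (a, b) ∈ playRel omega1 pl := by
    intro a ha
    obtain ⟨β, hβ, h1⟩ := hcover a.1 ha true
    simp only [if_true] at h1
    have h1' : (pl β).1 = Sum.inl a :=
      h1.trans (congrArg Sum.inl (Subtype.ext rfl))
    have ho := hopp β hβ
    rcases h2 : (pl β).2 with b | b
    · rw [h1', h2] at ho
      exact absurd ho (fun hfalse => hfalse)
    · refine ⟨b, ?_, ?_⟩
      · have hco := (hcoord β hβ).2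
        rw [h2] at hco
        exact hco
      · refine Set.mem_biUnion hβ ?_
        rw [h1', h2]
        exact Or.inl ⟨rfl, rfl⟩
  have hexB : ∀ b : Elt, (b : Ordinal) < α →
      ∃ a : Elt, (a : Ordinal) < α ∧ (a, b) ∈ playRel omega1 pl := by
    intro b hb
    obtain ⟨β, hβ, h1⟩ := hcover b.1 hb false
    simp only [Bool.false_eq_true, if_false] at h1
    have h1' : (pl β).1 = Sum.inr b :=
      h1.trans (congrArg Sum.inr (Subtype.ext rfl))
    have ho := hopp β hβ
    rcases h2 : (pl β).2 with a | a
    · refine ⟨a, ?_, ?_⟩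
      · have hco := (hcoord β hβ).2
        rw [h2] at hco
        exact hco
      · refine Set.mem_biUnion hβ ?_
        rw [h1', h2]
        exact Or.inr ⟨rfl, rfl⟩
    · rw [h1', h2] at ho
      exact absurd ho (fun hfalse => hfalse)
  choose fA hA1 hA2 using hexA
  choose fB hB1 hB2 using hexB
  let e : ↥{x : Elt | (x : Ordinal) < α} ≃ ↥{x : Elt | (x : Ordinal) < α} :=
    { toFun := fun a => ⟨fA a.1 a.2, hA1 a.1 a.2⟩
      invFun := fun b => ⟨fB b.1 b.2, hB1 b.1 b.2⟩
      left_inv := by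
        intro a
        apply Subtype.ext
        have p := hB2 (fA a.1 a.2) (hA1 a.1 a.2)
        have q := hA2 a.1 a.2
        exact (hfunc _ p _ q).2 rfl
      right_inv := by
        intro b
        apply Subtype.ext
        have q := hA2 (fB b.1 b.2) (hB1 b.1 b.2)
        have p := hB2 b.1 b.2
        exact (hfunc _ q _ p).1 rfl }
  refine hS ⟨α, ⟨hαω₂, e, ?_⟩, hαC⟩
  intro n R a
  exact hrel n R _ _ (fun i => hA2 (a i).1 (a i).2)
end

section
/- Assume I*(ω): letting I be the ideal of subsets of ω₂ that are not ω₁-stationary, and I⁺ = {S ⊆ ω₂ : S ∉ I}, there is a family K ⊆ I⁺ which is dense in (I⁺,⊆) (every S ∈ I⁺ has a subset belonging to K) and σ-closed (for every ⊆-decreasing sequence ⟨S_n : n < ω⟩ of members of K there is S ∈ K with S ⊆ S_n for all n). Then for all structures 𝒜 and ℬ of cardinality ≤ ℵ₂ in the same relational vocabulary, the game EF_{ω₁}(𝒜,ℬ) is determined. -/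
universe u v w x t

open FirstOrder

/-- The principle `I*(ω)`: the collection of `ω₁`-stationary subsets of `ω₂` (the sets that
are positive for the `ω₁`-nonstationary ideal) has a dense σ-closed subfamily `K`. -/
def IStarOmega : Prop :=
  ∃ K : Set (Set Ordinal.{0}),
    (∀ S ∈ K, S ⊆ Set.Iio omega2 ∧ Omega1Stationary S) ∧
    (∀ S : Set Ordinal.{0}, S ⊆ Set.Iio omega2 → Omega1Stationary S → ∃ T ∈ K, T ⊆ S) ∧
    (∀ f : ℕ → Set Ordinal.{0}, (∀ n, f n ∈ K) → (∀ n, f (n + 1) ⊆ f n) →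
      ∃ S ∈ K, ∀ n, S ⊆ f n)

noncomputable section Comb
open Cardinal Ordinal Set Classical

lemma aleph2_regular : Cardinal.IsRegular (Cardinal.aleph 2) := by
  have : (2 : Ordinal) = Order.succ 1 := by simp [one_add_one_eq_two]
  rw [this]
  exact Cardinal.isRegular_aleph_succ 1

lemma omega1_pos : 0 < omega1 := by
  rw [omega1, Cardinal.lt_ord]
  simpa using Cardinal.aleph_pos 1

lemma omega2_isLimit : Order.IsSuccLimit omega2 := Cardinal.isSuccLimit_ord (Cardinal.aleph0_le_aleph 2)

lemma omega1_isLimit : Order.IsSuccLimit omega1 := Cardinal.isSuccLimit_ord (Cardinal.aleph0_le_aleph 1)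

lemma lt_omega2_card {o : Ordinal} (h : o < omega2) : o.card < Cardinal.aleph 2 :=
  Cardinal.lt_ord.mp h

lemma lt_omega1_card {o : Ordinal} (h : o < omega1) : o.card < Cardinal.aleph 1 :=
  Cardinal.lt_ord.mp h

lemma omega1_lt_omega2 : omega1 < omega2 := by
  rw [omega1, omega2, Cardinal.ord_lt_ord]
  exact Cardinal.aleph_lt_aleph.mpr one_lt_two

lemma add_lt_omega1 {a b : Ordinal} (ha : a < omega1) (hb : b < omega1) : a + b < omega1 := by
  rw [omega1, Cardinal.lt_ord, Ordinal.card_add]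
  exact Cardinal.add_lt_of_lt (Cardinal.aleph0_le_aleph 1) (lt_omega1_card ha) (lt_omega1_card hb)

lemma add_one_lt_omega1 {a : Ordinal} (ha : a < omega1) : a + 1 < omega1 := by
  rw [Ordinal.add_one_eq_succ]
  exact omega1_isLimit.succ_lt ha

lemma card_le_aleph1_of_lt_omega2 {o : Ordinal} (h : o < omega2) : o.card ≤ Cardinal.aleph 1 := by
  have h1 : o.card < Cardinal.aleph 2 := lt_omega2_card h
  have h2 : (Cardinal.aleph 2) = Order.succ (Cardinal.aleph 1) := by
    have : (2 : Ordinal) = Order.succ 1 := by simp [one_add_one_eq_two]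
    rw [this, Cardinal.aleph_succ]
  rw [h2, Order.lt_succ_iff] at h1
  exact h1

lemma bsup_lt_omega2 {o : Ordinal} (ho : o.card ≤ Cardinal.aleph 1)
    (f : ∀ a < o, Ordinal) (hf : ∀ i h, f i h < omega2) : Ordinal.bsup o f < omega2 := by
  rw [omega2]
  apply Ordinal.bsup_lt_ord _ (by rw [← omega2]; exact hf)
  rw [aleph2_regular.cof_eq]
  exact lt_of_le_of_lt ho (Cardinal.aleph_lt_aleph.mpr one_lt_two)


lemma small_image_Iio (f : Ordinal.{0} → Ordinal.{0}) (o : Ordinal.{0}) :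
    Small.{0} (f '' Set.Iio o) := by
  have h : Small.{0} (Set.Iio o) := by
    rw [← Ordinal.bddAbove_iff_small]
    exact ⟨o, fun x hx => le_of_lt hx⟩
  exact @small_image _ _ f _ h

lemma bddAbove_image_Iio (f : Ordinal.{0} → Ordinal.{0}) (o : Ordinal.{0}) :
    BddAbove (f '' Set.Iio o) :=
  have := small_image_Iio f o
  Ordinal.bddAbove_of_small

lemma le_sSup_image {f : Ordinal.{0} → Ordinal.{0}} {o i : Ordinal.{0}} (hi : i < o) :
    f i ≤ sSup (f '' Set.Iio o) :=
  le_csSup (bddAbove_image_Iio f o) ⟨i, hi, rfl⟩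

lemma sSup_image_le {f : Ordinal.{0} → Ordinal.{0}} {o a : Ordinal.{0}} (ho : o ≠ 0)
    (h : ∀ i < o, f i ≤ a) : sSup (f '' Set.Iio o) ≤ a := by
  apply csSup_le
  · exact ⟨f 0, 0, pos_iff_ne_zero.mpr ho, rfl⟩
  · rintro x ⟨i, hi, rfl⟩; exact h i hi

lemma exists_lt_of_lt_sSup_image {f : Ordinal.{0} → Ordinal.{0}} {o a : Ordinal.{0}} (ho : o ≠ 0)
    (h : a < sSup (f '' Set.Iio o)) : ∃ i < o, a < f i := by
  by_contra hc
  push_neg at hc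
  exact absurd (sSup_image_le ho hc) (not_le.mpr h)

lemma sSup_image_Iio_omega1_lt (f : Ordinal.{0} → Ordinal.{0})
    (hf : ∀ i < omega1, f i < omega2) : sSup (f '' Set.Iio omega1) < omega2 := by
  have h1 : sSup (f '' Set.Iio omega1) ≤ Ordinal.bsup omega1 (fun i _ => f i) := by
    apply sSup_image_le (ne_of_gt omega1_pos)
    intro i hi
    exact Ordinal.le_bsup (fun i _ => f i) i hi
  refine lt_of_le_of_lt h1 (bsup_lt_omega2 ?_ _ (fun i h => hf i h))
  rw [omega1, Cardinal.card_ord]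

/-- `C` is an `ω₁`-club subset of `ω₂`. -/
def UClub (C : Set Ordinal.{0}) : Prop :=
  C ⊆ Set.Iio omega2 ∧ Omega1Closed C ∧ ∀ β < omega2, ∃ x ∈ C, β ≤ x

lemma omega1Stationary_iff {S : Set Ordinal.{0}} :
    Omega1Stationary S ↔ ∀ C, UClub C → (S ∩ C).Nonempty := by
  constructor
  · intro h C ⟨h1, h2, h3⟩; exact h C h1 h2 h3
  · intro h C h1 h2 h3; exact h C ⟨h1, h2, h3⟩

lemma uclub_Iio : UClub (Set.Iio omega2) := by
  refine ⟨le_refl _, ?_, fun β hβ => ⟨β, hβ, le_refl β⟩⟩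
  intro f hmono hmem
  exact sSup_image_Iio_omega1_lt f hmem

lemma stat_nonempty {S : Set Ordinal.{0}} (h : Omega1Stationary S) : S.Nonempty := by
  obtain ⟨x, hx, -⟩ := (omega1Stationary_iff.mp h) _ uclub_Iio
  exact ⟨x, hx⟩

lemma stat_mono {S T : Set Ordinal.{0}} (hST : S ⊆ T) (h : Omega1Stationary S) :
    Omega1Stationary T := fun C h1 h2 h3 => by
  obtain ⟨x, hx1, hx2⟩ := h C h1 h2 h3
  exact ⟨x, hST hx1, hx2⟩

/-- The sup over a tail equals the sup over everything, for strictly monotone `f`. -/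
lemma sSup_image_Ico_eq {f : Ordinal.{0} → Ordinal.{0}} {i₀ : Ordinal.{0}}
    (hmono : ∀ i j, i₀ ≤ i → i < j → j < omega1 → f i ≤ f j) (hi₀ : i₀ < omega1)
    (hmono0 : ∀ j, j < i₀ → f j ≤ f i₀) :
    sSup (f '' Set.Iio omega1) = sSup (f '' Set.Ico i₀ omega1) := by
  have hbdd : BddAbove (f '' Set.Ico i₀ omega1) := by
    apply BddAbove.mono _ (bddAbove_image_Iio f omega1)
    exact Set.image_mono (fun x hx => hx.2)
  apply le_antisymm
  · apply sSup_image_le (ne_of_gt omega1_pos)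
    intro i hi
    rcases lt_or_ge i i₀ with h | h
    · exact le_trans (hmono0 i h) (le_csSup hbdd ⟨i₀, ⟨le_refl _, hi₀⟩, rfl⟩)
    · exact le_csSup hbdd ⟨i, ⟨h, hi⟩, rfl⟩
  · apply csSup_le (Set.Nonempty.image f ⟨i₀, Set.mem_Ico.mpr ⟨le_refl _, hi₀⟩⟩)
    rintro x ⟨i, ⟨-, hi⟩, rfl⟩
    exact le_sSup_image hi

/-- Closure under tails: if `f` is eventually strictly monotone with values in an
`ω₁`-closed set `D`, the sup of its image lies in `D`. -/
lemma tail_mem_omega1Closed {D : Set Ordinal.{0}} (hD : Omega1Closed D)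
    {f : Ordinal.{0} → Ordinal.{0}} {i₀ : Ordinal.{0}} (hi₀ : i₀ < omega1)
    (hmono : ∀ i j, i₀ ≤ i → i < j → j < omega1 → f i < f j)
    (hmem : ∀ j, i₀ ≤ j → j < omega1 → f j ∈ D) :
    sSup (f '' Set.Ico i₀ omega1) ∈ D := by
  set g : Ordinal.{0} → Ordinal.{0} := fun i => f (i₀ + i) with hg
  have himg : g '' Set.Iio omega1 = f '' Set.Ico i₀ omega1 := by
    ext x
    constructor
    · rintro ⟨i, hi, rfl⟩
      exact ⟨i₀ + i, ⟨le_self_add, add_lt_omega1 hi₀ hi⟩, rfl⟩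
    · rintro ⟨j, ⟨hj1, hj2⟩, rfl⟩
      refine ⟨j - i₀, ?_, ?_⟩
      · exact lt_of_le_of_lt (Ordinal.sub_le_self j i₀) hj2
      · rw [hg]; simp only [Ordinal.add_sub_cancel_of_le hj1]
  rw [← himg]
  apply hD
  · intro i hi j hj hij
    apply hmono _ _ (le_self_add) _ (add_lt_omega1 hi₀ hj)
    rwa [add_lt_add_iff_left]
  · intro i hi
    exact hmem _ (le_self_add) (add_lt_omega1 hi₀ hi)


section Diag
variable (D : Ordinal.{0} → Set Ordinal.{0})

/-- A choice of an element of `D η` above `x`. -/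
noncomputable def nxt (η x : Ordinal.{0}) : Ordinal.{0} :=
  if h : ∃ y ∈ D η, x ≤ y then h.choose else 0

lemma nxt_spec {η x : Ordinal.{0}} (h : ∃ y ∈ D η, x ≤ y) :
    nxt D η x ∈ D η ∧ x ≤ nxt D η x := by
  rw [nxt, dif_pos h]
  exact ⟨h.choose_spec.1, h.choose_spec.2⟩

noncomputable def Gfn (x : Ordinal.{0}) : Ordinal.{0} :=
  max x (Ordinal.bsup x (fun η _ => nxt D η x)) + 1

lemma lt_Gfn_self (x : Ordinal.{0}) : x < Gfn D x :=
  lt_of_le_of_lt (le_max_left _ _) (lt_add_one _)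

lemma nxt_lt_Gfn {η x : Ordinal.{0}} (hη : η < x) : nxt D η x < Gfn D x :=
  lt_of_le_of_lt (le_trans (Ordinal.le_bsup _ η hη) (le_max_right _ _)) (lt_add_one _)

/-- The iteration function for proving unboundedness of the diagonal club. -/
noncomputable def hfn (b : Ordinal.{0}) : Ordinal.{0} → Ordinal.{0} :=
  Ordinal.lt_wf.fix (fun β ih => max b (Ordinal.bsup β (fun γ hγ => Gfn D (ih γ hγ))) + 1)

lemma hfn_eq (b β : Ordinal.{0}) :
    hfn D b β = max b (Ordinal.bsup β (fun γ _ => Gfn D (hfn D b γ))) + 1 :=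
  Ordinal.lt_wf.fix_eq _ β

lemma hfn_gt_base (b β : Ordinal.{0}) : b < hfn D b β := by
  rw [hfn_eq]
  exact lt_of_le_of_lt (le_max_left _ _) (lt_add_one _)

lemma Gfn_hfn_lt (b : Ordinal.{0}) {γ β : Ordinal.{0}} (h : γ < β) :
    Gfn D (hfn D b γ) < hfn D b β := by
  conv_rhs => rw [hfn_eq]
  exact lt_of_le_of_lt (le_trans (Ordinal.le_bsup _ γ h) (le_max_right _ _)) (lt_add_one _)

lemma hfn_strictMono (b : Ordinal.{0}) {γ β : Ordinal.{0}} (h : γ < β) :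
    hfn D b γ < hfn D b β :=
  lt_trans (lt_Gfn_self D _) (Gfn_hfn_lt D b h)

variable (hD : ∀ η < omega2, UClub (D η))
include hD

lemma nxt_lt_omega2 {η x : Ordinal.{0}} (hη : η < omega2) (hx : x < omega2) :
    nxt D η x ∈ D η ∧ x ≤ nxt D η x ∧ nxt D η x < omega2 := by
  have h : ∃ y ∈ D η, x ≤ y := (hD η hη).2.2 x hx
  obtain ⟨h1, h2⟩ := nxt_spec D h
  exact ⟨h1, h2, (hD η hη).1 h1⟩

lemma Gfn_lt_omega2 {x : Ordinal.{0}} (hx : x < omega2) : Gfn D x < omega2 := by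
  rw [Gfn]
  have h1 : max x (Ordinal.bsup x (fun η _ => nxt D η x)) < omega2 := by
    apply max_lt hx
    exact bsup_lt_omega2 (card_le_aleph1_of_lt_omega2 hx) _
      (fun η hη => (nxt_lt_omega2 D hD (lt_trans hη hx) hx).2.2)
  rw [Ordinal.add_one_eq_succ]
  exact omega2_isLimit.succ_lt h1

lemma hfn_lt_omega2 (b : Ordinal.{0}) (hb : b < omega2) :
    ∀ β < omega1, hfn D b β < omega2 := by
  intro β
  induction β using Ordinal.induction with
  | _ β IH =>
    intro hβ
    rw [hfn_eq]
    have h1 : Ordinal.bsup β (fun γ _ => Gfn D (hfn D b γ)) < omega2 := by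
      apply bsup_lt_omega2 (card_le_aleph1_of_lt_omega2 (lt_trans hβ omega1_lt_omega2)) _ ?_
      intro γ hγ
      exact Gfn_lt_omega2 D hD (IH γ hγ (lt_trans hγ hβ))
    rw [Ordinal.add_one_eq_succ]
    exact omega2_isLimit.succ_lt (max_lt hb h1)


/-- The diagonal set of an `ω₂`-indexed family of `ω₁`-clubs. -/
lemma uclub_diag : UClub {δ | δ < omega2 ∧ ∀ η < δ, δ ∈ D η} := by
  constructor
  · exact fun δ hδ => hδ.1
  constructor
  · -- ω₁-closedness
    intro f hmono hmem
    set s := sSup (f '' Set.Iio omega1) with hs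
    have hslt : s < omega2 := sSup_image_Iio_omega1_lt f (fun i hi => (hmem i hi).1)
    refine ⟨hslt, ?_⟩
    intro η hη
    obtain ⟨i₀, hi₀, hi₀2⟩ := exists_lt_of_lt_sSup_image (ne_of_gt omega1_pos) hη
    have hηo2 : η < omega2 := lt_trans hη hslt
    have htail : sSup (f '' Set.Ico i₀ omega1) ∈ D η := by
      apply tail_mem_omega1Closed (hD η hηo2).2.1 hi₀
      · intro i j h1 h2 h3
        exact hmono (lt_trans h2 h3) h3 h2
      · intro j hj1 hj2
        have : η < f j := lt_of_lt_of_le hi₀2 (by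
          rcases eq_or_lt_of_le hj1 with h | h
          · rw [h]
          · exact le_of_lt (hmono hi₀ hj2 h))
        exact (hmem j hj2).2 η this
    rwa [← sSup_image_Ico_eq (fun i j h1 h2 h3 => le_of_lt (hmono (lt_trans h2 h3) h3 h2)) hi₀
      (fun j hj => le_of_lt (hmono (lt_trans hj hi₀) hi₀ hj))] at htail
  · -- unboundedness
    intro b hb
    set s := sSup (hfn D b '' Set.Iio omega1) with hs
    have hlt : ∀ β < omega1, hfn D b β < omega2 := hfn_lt_omega2 D hD b hb
    have hslt : s < omega2 := sSup_image_Iio_omega1_lt _ hlt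
    have hbs : b ≤ s := le_of_lt (lt_of_lt_of_le (hfn_gt_base D b 0)
      (le_sSup_image omega1_pos))
    refine ⟨s, ⟨hslt, ?_⟩, hbs⟩
    intro η hη
    obtain ⟨i₀, hi₀, hi₀2⟩ := exists_lt_of_lt_sSup_image (ne_of_gt omega1_pos) hη
    have hηo2 : η < omega2 := lt_trans hη hslt
    -- the sequence of `nxt`-values above the tail
    set c : Ordinal.{0} → Ordinal.{0} := fun j => nxt D η (hfn D b j) with hc
    have hcmem : ∀ j, i₀ ≤ j → j < omega1 → (c j ∈ D η ∧ hfn D b j ≤ c j ∧ c j < omega2) := by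
      intro j hj1 hj2
      exact nxt_lt_omega2 D hD hηo2 (hlt j hj2)
    have hclt : ∀ j, i₀ ≤ j → j < omega1 → c j < hfn D b (j + 1) := by
      intro j hj1 hj2
      have hηj : η < hfn D b j := lt_of_lt_of_le hi₀2 (by
        rcases eq_or_lt_of_le hj1 with h | h
        · rw [h]
        · exact le_of_lt (hfn_strictMono D b h))
      exact lt_trans (nxt_lt_Gfn D hηj) (Gfn_hfn_lt D b (lt_add_one j))
    have hmono2 : ∀ i j, i₀ ≤ i → i < j → j < omega1 → c i < c j := by
      intro i j h1 h2 h3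
      have : hfn D b (i + 1) ≤ hfn D b j := by
        rcases eq_or_lt_of_le (Order.add_one_le_of_lt h2) with h | h
        · rw [h]
        · exact le_of_lt (hfn_strictMono D b h)
      exact lt_of_lt_of_le (hclt i h1 (lt_trans h2 h3)) (le_trans this
        ((hcmem j (le_trans h1 (le_of_lt h2)) h3).2.1))
    have hmem2 : ∀ j, i₀ ≤ j → j < omega1 → c j ∈ D η := fun j h1 h2 => (hcmem j h1 h2).1
    have hDη : sSup (c '' Set.Ico i₀ omega1) ∈ D η :=
      tail_mem_omega1Closed (hD η hηo2).2.1 hi₀ hmono2 hmem2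
    -- identify the two sups
    have hbdd : BddAbove (c '' Set.Ico i₀ omega1) := by
      apply BddAbove.mono _ (bddAbove_image_Iio c omega1)
      exact Set.image_mono (fun x hx => hx.2)
    have heq : sSup (c '' Set.Ico i₀ omega1) = s := by
      apply le_antisymm
      · apply csSup_le (Set.Nonempty.image c ⟨i₀, Set.mem_Ico.mpr ⟨le_refl _, hi₀⟩⟩)
        rintro x ⟨j, ⟨hj1, hj2⟩, rfl⟩
        exact le_trans (le_of_lt (hclt j hj1 hj2))
          (le_sSup_image (add_one_lt_omega1 hj2))
      · apply sSup_image_le (ne_of_gt omega1_pos)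
        intro i hi
        rcases lt_or_ge i i₀ with h | h
        · exact le_trans (le_of_lt (hfn_strictMono D b h))
            (le_trans ((hcmem i₀ (le_refl _) hi₀).2.1) (le_csSup hbdd ⟨i₀, Set.mem_Ico.mpr ⟨le_refl _, hi₀⟩, rfl⟩))
        · exact le_trans ((hcmem i h hi).2.1) (le_csSup hbdd ⟨i, Set.mem_Ico.mpr ⟨h, hi⟩, rfl⟩)
    rwa [heq] at hDη

end Diag

/-- Fodor's lemma for the `ω₁`-club filter on `ω₂`. -/
lemma fodor {S : Set Ordinal.{0}} (hS : S ⊆ Set.Iio omega2) (hst : Omega1Stationary S)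
    (F : Ordinal.{0} → Ordinal.{0}) (hF : ∀ δ ∈ S, F δ < δ) :
    ∃ η, Omega1Stationary {δ ∈ S | F δ = η} := by
  by_contra hcon
  push_neg at hcon
  have hC : ∀ η : Ordinal.{0}, ∃ C, UClub C ∧ ({δ ∈ S | F δ = η} ∩ C) = ∅ := by
    intro η
    have := hcon η
    rw [Omega1Stationary] at this
    push_neg at this
    obtain ⟨C, h1, h2, h3, h4⟩ := this
    exact ⟨C, ⟨h1, h2, h3⟩, h4⟩
  choose Cf hCf1 hCf2 using hC
  have hdiag := uclub_diag Cf (fun η _ => hCf1 η)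
  obtain ⟨δ, hδS, hδd⟩ := (omega1Stationary_iff.mp hst) _ hdiag
  have hFδ : F δ < δ := hF δ hδS
  have : δ ∈ Cf (F δ) := hδd.2 (F δ) hFδ
  have : δ ∈ {δ' ∈ S | F δ' = F δ} ∩ Cf (F δ) := ⟨⟨hδS, rfl⟩, this⟩
  rw [hCf2 (F δ)] at this
  exact this

/-- An `ω₁`-stationary set minus a bounded part is `ω₁`-stationary. -/
lemma stat_diff_bounded {S : Set Ordinal.{0}} (hst : Omega1Stationary S)
    {b : Ordinal.{0}} (hb : b < omega2) : Omega1Stationary {δ ∈ S | b < δ} := by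
  rw [omega1Stationary_iff]
  intro C ⟨h1, h2, h3⟩
  have h3' : ∀ β < omega2, ∃ x ∈ C ∩ {x | b < x}, β ≤ x := by
    intro β hβ
    have hmax : max β (b + 1) < omega2 := max_lt hβ (by
      rw [Ordinal.add_one_eq_succ]; exact omega2_isLimit.succ_lt hb)
    obtain ⟨x, hx1, hx2⟩ := h3 _ hmax
    exact ⟨x, ⟨hx1, lt_of_lt_of_le (lt_of_lt_of_le (lt_add_one b) (le_trans (le_max_right _ _) hx2)) (le_refl _)⟩,
      le_trans (le_max_left _ _) hx2⟩
  have hcl : Omega1Closed (C ∩ {x | b < x}) := by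
    intro f hmono hmem
    refine ⟨h2 f hmono (fun i hi => (hmem i hi).1), ?_⟩
    exact lt_of_lt_of_le (hmem 0 omega1_pos).2 (le_sSup_image omega1_pos)
  obtain ⟨x, hx1, hx2, hx3⟩ := hst (C ∩ {x | b < x})
    (fun x hx => h1 hx.1) hcl h3'
  exact ⟨x, ⟨hx1, hx3⟩, hx2⟩


lemma card_le_aleph0_of_lt_omega1 {o : Ordinal} (h : o < omega1) : o.card ≤ Cardinal.aleph 0 := by
  have h1 : o.card < Cardinal.aleph 1 := lt_omega1_card h
  have h2 : (Cardinal.aleph 1) = Order.succ (Cardinal.aleph 0) := by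
    have : (1 : Ordinal) = Order.succ 0 := by simp
    rw [this, Cardinal.aleph_succ]
  rw [h2, Order.lt_succ_iff] at h1
  exact h1

lemma mk_Iio_eq (o : Ordinal.{0}) : Cardinal.mk (Set.Iio o) = Cardinal.lift.{1} o.card :=
  Ordinal.mk_Iio_ordinal o

/-- Every countable limit ordinal has an `ω`-indexed cofinal enumeration. -/
lemma exists_nat_cofinal {β : Ordinal.{0}} (hβ : β ≠ 0) (hβ1 : β < omega1) :
    ∃ e : ℕ → Ordinal.{0}, (∀ n, e n < β) ∧ ∀ γ < β, ∃ n, γ = e n := by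
  have hcnt : Countable (Set.Iio β) := by
    rw [← Cardinal.mk_le_aleph0_iff, mk_Iio_eq]
    calc Cardinal.lift.{1} β.card ≤ Cardinal.lift.{1} (Cardinal.aleph 0) :=
          Cardinal.lift_le.mpr (card_le_aleph0_of_lt_omega1 hβ1)
      _ = Cardinal.aleph0 := by simp
  have hne : Nonempty (Set.Iio β) := ⟨⟨0, pos_iff_ne_zero.mpr hβ⟩⟩
  obtain ⟨f, hf⟩ := exists_surjective_nat (Set.Iio β)
  refine ⟨fun n => (f n).1, fun n => (f n).2, fun γ hγ => ?_⟩
  obtain ⟨n, hn⟩ := hf ⟨γ, hγ⟩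
  exact ⟨n, by simp [hn]⟩

/-- There is no injection of `ω₁` into a countable ordinal. -/
lemma no_inj_omega1 {α : Ordinal.{0}} (hα : α < omega1) (F : Ordinal.{0} → Ordinal.{0})
    (hF1 : ∀ ξ < omega1, F ξ < α)
    (hinj : ∀ ξ ξ', ξ < omega1 → ξ' < omega1 → F ξ = F ξ' → ξ = ξ') : False := by
  have hmk : Cardinal.mk (Set.Iio omega1) ≤ Cardinal.mk (Set.Iio α) := by
    apply Cardinal.mk_le_of_injective (f := fun x : Set.Iio omega1 => 
      (⟨F x.1, hF1 x.1 x.2⟩ : Set.Iio α))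
    intro x y hxy
    exact Subtype.ext (hinj _ _ x.2 y.2 (congrArg Subtype.val hxy))
  rw [mk_Iio_eq, mk_Iio_eq, Cardinal.lift_le, omega1, Cardinal.card_ord] at hmk
  exact absurd (lt_of_le_of_lt hmk (lt_omega1_card hα)) (lt_irrefl _)

/-- A pairing function on `ω₁`. -/
lemma exists_pairing : ∃ c : Ordinal.{0} → Ordinal.{0} × Ordinal.{0},
    (∀ α < omega1, (c α).1 < omega1 ∧ (c α).2 < omega1) ∧
    (∀ γ ξ, γ < omega1 → ξ < omega1 → ∃ α < omega1, c α = (γ, ξ)) ∧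
    (∀ α α', α < omega1 → α' < omega1 → c α = c α' → α = α') := by
  have hmk : Cardinal.mk (Set.Iio omega1) =
      Cardinal.mk (Set.Iio omega1 × Set.Iio omega1) := by
    rw [Cardinal.mk_prod, mk_Iio_eq, omega1, Cardinal.card_ord]
    simp only [Cardinal.lift_id]
    rw [← Cardinal.lift_mul, Cardinal.mul_eq_self (Cardinal.aleph0_le_aleph 1)]
  obtain ⟨E⟩ := Cardinal.eq.mp hmk
  refine ⟨fun α => if h : α < omega1 then (((E ⟨α, h⟩).1 : Ordinal), ((E ⟨α, h⟩).2 : Ordinal))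
    else (0, 0), ?_, ?_, ?_⟩
  · intro α hα
    dsimp only
    rw [dif_pos hα]
    exact ⟨(E ⟨α, hα⟩).1.2, (E ⟨α, hα⟩).2.2⟩
  · intro γ ξ hγ hξ
    refine ⟨(E.symm (⟨γ, hγ⟩, ⟨ξ, hξ⟩)).1, (E.symm (⟨γ, hγ⟩, ⟨ξ, hξ⟩)).2, ?_⟩
    dsimp only
    rw [dif_pos (show ((E.symm (⟨γ, hγ⟩, ⟨ξ, hξ⟩) : Set.Iio omega1) : Ordinal.{0}) < omega1 from (E.symm (⟨γ, hγ⟩, ⟨ξ, hξ⟩)).2)]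
    have : E ⟨((E.symm (⟨γ, hγ⟩, ⟨ξ, hξ⟩)) : Set.Iio omega1).1,
        (E.symm (⟨γ, hγ⟩, ⟨ξ, hξ⟩)).2⟩ = (⟨γ, hγ⟩, ⟨ξ, hξ⟩) := by
      rw [Subtype.coe_eta]
      exact E.apply_symm_apply _
    rw [this]
  · intro α α' hα hα' h
    dsimp only at h
    rw [dif_pos hα, dif_pos hα'] at h
    have h1 : E ⟨α, hα⟩ = E ⟨α', hα'⟩ := by
      apply Prod.ext
      · exact Subtype.ext (congrArg Prod.fst h)
      · exact Subtype.ext (congrArg Prod.snd h)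
    exact congrArg Subtype.val (E.injective h1)

end Comb

noncomputable section ExistsSide
open Cardinal Ordinal Set Classical

variable {L : FirstOrder.Language.{u, v}} {M N : Type w}
  (SM : L.Structure M) (SN : L.Structure N)
  (idxA : M → Ordinal.{0}) (idxB : N → Ordinal.{0})

/-- The initial part of `M` of index `< δ`. -/
def Asub (δ : Ordinal.{0}) : Set M := {a | idxA a < δ}

/-- The initial part of `N` of index `< δ`. -/
def Bsub (δ : Ordinal.{0}) : Set N := {b | idxB b < δ}

/-- An isomorphism of induced substructures. -/
def SetIso (s : Set M) (t : Set N) : Prop :=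
  ∃ e : s ≃ t, ∀ (n : ℕ) (R : L.Relations n) (v : Fin n → s),
    SM.RelMap R (fun i => (v i : M)) ↔ SN.RelMap R (fun i => ((e (v i) : N)))

/-- The set of `δ < ω₂` where the filtrations are isomorphic. -/
def IsoSet : Set Ordinal.{0} :=
  {δ | δ < omega2 ∧ SetIso SM SN (Asub idxA δ) (Bsub idxB δ)}

/-- A chosen isomorphism of the induced substructures at level `δ`. -/
def isoE (δ : Ordinal.{0}) (h : SetIso SM SN (Asub idxA δ) (Bsub idxB δ)) :
    (Asub idxA δ) ≃ (Bsub idxB δ) := h.choose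

/-- The graph of the chosen isomorphism at level `δ`. -/
def gGraph (δ : Ordinal.{0}) : Set (M × N) :=
  {p | ∃ (h : SetIso SM SN (Asub idxA δ) (Bsub idxB δ)) (ha : p.1 ∈ Asub idxA δ),
    ((isoE SM SN idxA idxB δ h) ⟨p.1, ha⟩ : N) = p.2}

section gLemmas
variable {SM SN idxA idxB}
variable {δ : Ordinal.{0}} (hδ : SetIso SM SN (Asub idxA δ) (Bsub idxB δ))

lemma g_mem_iff {p : M × N} :
    p ∈ gGraph SM SN idxA idxB δ ↔
      ∃ ha : p.1 ∈ Asub idxA δ, ((isoE SM SN idxA idxB δ hδ) ⟨p.1, ha⟩ : N) = p.2 := by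
  constructor
  · rintro ⟨h, ha, he⟩; exact ⟨ha, he⟩
  · rintro ⟨ha, he⟩; exact ⟨hδ, ha, he⟩

include hδ

lemma g_iff {p q : M × N} (hp : p ∈ gGraph SM SN idxA idxB δ)
    (hq : q ∈ gGraph SM SN idxA idxB δ) : (p.1 = q.1 ↔ p.2 = q.2) := by
  rw [g_mem_iff hδ] at hp hq
  obtain ⟨ha, he⟩ := hp
  obtain ⟨ha', he'⟩ := hq
  constructor
  · intro h
    have hh : (⟨p.1, ha⟩ : Asub idxA δ) = ⟨q.1, ha'⟩ := Subtype.ext h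
    rw [← he, ← he', hh]
  · intro h
    rw [← he, ← he'] at h
    have := (isoE SM SN idxA idxB δ hδ).injective (Subtype.ext h)
    exact congrArg Subtype.val this

lemma g_total_A {a : M} (ha : a ∈ Asub idxA δ) :
    ∃ b, (a, b) ∈ gGraph SM SN idxA idxB δ ∧ b ∈ Bsub idxB δ :=
  ⟨(isoE SM SN idxA idxB δ hδ ⟨a, ha⟩ : N), ⟨hδ, ha, rfl⟩,
    (isoE SM SN idxA idxB δ hδ ⟨a, ha⟩).2⟩

lemma g_total_B {b : N} (hb : b ∈ Bsub idxB δ) :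
    ∃ a, (a, b) ∈ gGraph SM SN idxA idxB δ ∧ a ∈ Asub idxA δ := by
  refine ⟨((isoE SM SN idxA idxB δ hδ).symm ⟨b, hb⟩ : M), ⟨hδ,
    ((isoE SM SN idxA idxB δ hδ).symm ⟨b, hb⟩).2, ?_⟩,
    ((isoE SM SN idxA idxB δ hδ).symm ⟨b, hb⟩).2⟩
  rw [Subtype.coe_eta]
  rw [(isoE SM SN idxA idxB δ hδ).apply_symm_apply]

lemma g_mem_B {p : M × N} (hp : p ∈ gGraph SM SN idxA idxB δ) : p.2 ∈ Bsub idxB δ := by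
  rw [g_mem_iff hδ] at hp
  obtain ⟨ha, he⟩ := hp
  rw [← he]
  exact (isoE SM SN idxA idxB δ hδ ⟨p.1, ha⟩).2

lemma g_rel {n : ℕ} (R : L.Relations n) (a : Fin n → M) (b : Fin n → N)
    (hab : ∀ i, (a i, b i) ∈ gGraph SM SN idxA idxB δ) :
    SM.RelMap R a ↔ SN.RelMap R b := by
  have ha : ∀ i, a i ∈ Asub idxA δ := by
    intro i
    obtain ⟨hai, -⟩ := (g_mem_iff hδ).mp (hab i)
    exact hai
  have hspec := hδ.choose_spec n R (fun i => ⟨a i, ha i⟩)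
  have h1 : (fun i => ((⟨a i, ha i⟩ : Asub idxA δ) : M)) = a := rfl
  have h2 : (fun i => ((hδ.choose (⟨a i, ha i⟩ : Asub idxA δ)) : N)) = b := by
    funext i
    obtain ⟨hai, he⟩ := (g_mem_iff hδ).mp (hab i)
    exact he
  rw [h1, h2] at hspec
  exact hspec

end gLemmas

section Strategy
variable [Nonempty M] [Nonempty N]
variable (K : Set (Set Ordinal.{0})) (S0 : Set Ordinal.{0})

/-- A default reply respecting `Opp`. -/
def oppDefault : M ⊕ N → M ⊕ N
  | Sum.inl _ => Sum.inr (Classical.arbitrary N)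
  | Sum.inr _ => Sum.inl (Classical.arbitrary M)

lemma opp_oppDefault (x : M ⊕ N) : Opp x (oppDefault x) := by
  cases x <;> trivial

/-- A good step for the strategy of `∃`. -/
def StepOK (S : Set Ordinal.{0}) (x : M ⊕ N) (T : Set Ordinal.{0}) (y : M ⊕ N) : Prop :=
  T ∈ K ∧ T ⊆ S ∧ Opp x y ∧ ∀ δ ∈ T, pairRel x y ⊆ gGraph SM SN idxA idxB δ

/-- Choice of a good step. -/
def chooseStep (S : Set Ordinal.{0}) (x : M ⊕ N) : Set Ordinal.{0} × (M ⊕ N) :=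
  if h : ∃ p : Set Ordinal.{0} × (M ⊕ N), StepOK SM SN idxA idxB K S x p.1 p.2 then h.choose
  else (S, oppDefault x)

lemma chooseStep_opp (S : Set Ordinal.{0}) (x : M ⊕ N) :
    Opp x (chooseStep SM SN idxA idxB K S x).2 := by
  rw [chooseStep]
  split
  · next h => exact h.choose_spec.2.2.1
  · exact opp_oppDefault x

lemma chooseStep_spec {S : Set Ordinal.{0}} {x : M ⊕ N}
    (h : ∃ p : Set Ordinal.{0} × (M ⊕ N), StepOK SM SN idxA idxB K S x p.1 p.2) :
    StepOK SM SN idxA idxB K S x (chooseStep SM SN idxA idxB K S x).1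
      (chooseStep SM SN idxA idxB K S x).2 := by
  rw [chooseStep, dif_pos h]
  exact h.choose_spec

/-- Choice at limits. -/
def limChoose (β : Ordinal.{0}) (Sf : Ordinal.{0} → Set Ordinal.{0}) : Set Ordinal.{0} :=
  if h : ∃ T, T ∈ K ∧ ∀ γ < β, T ⊆ Sf γ then h.choose else S0

lemma limChoose_spec {β : Ordinal.{0}} {Sf : Ordinal.{0} → Set Ordinal.{0}}
    (h : ∃ T, T ∈ K ∧ ∀ γ < β, T ⊆ Sf γ) :
    limChoose K S0 β Sf ∈ K ∧ ∀ γ < β, limChoose K S0 β Sf ⊆ Sf γ := by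
  rw [limChoose, dif_pos h]
  exact h.choose_spec

/-- The recursively defined sequence of stationary sets along a play. -/
def Sfun (β : Ordinal.{0}) : (Ordinal.{0} → M ⊕ N) → Set Ordinal.{0} :=
  Ordinal.limitRecOn β (fun _ => S0)
    (fun γ ih h => (chooseStep SM SN idxA idxB K (ih h) (h γ)).1)
    (fun β _ ih h => limChoose K S0 β (fun γ => if hγ : γ < β then ih γ hγ h else ∅))

lemma Sfun_zero (h : Ordinal.{0} → M ⊕ N) : Sfun SM SN idxA idxB K S0 0 h = S0 := by
  rw [Sfun, Ordinal.limitRecOn_zero]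

lemma Sfun_succ (γ : Ordinal.{0}) (h : Ordinal.{0} → M ⊕ N) :
    Sfun SM SN idxA idxB K S0 (Order.succ γ) h =
      (chooseStep SM SN idxA idxB K (Sfun SM SN idxA idxB K S0 γ h) (h γ)).1 := by
  rw [Sfun, Ordinal.limitRecOn_succ]
  rfl

lemma Sfun_limit {β : Ordinal.{0}} (hβ : Order.IsSuccLimit β) (h : Ordinal.{0} → M ⊕ N) :
    Sfun SM SN idxA idxB K S0 β h =
      limChoose K S0 β (fun γ => if hγ : γ < β then Sfun SM SN idxA idxB K S0 γ h else ∅) := by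
  rw [Sfun, Ordinal.limitRecOn_limit _ _ _ _ hβ]
  rfl

lemma Sfun_congr (β : Ordinal.{0}) : ∀ h h' : Ordinal.{0} → M ⊕ N,
    (∀ γ < β, h γ = h' γ) → Sfun SM SN idxA idxB K S0 β h = Sfun SM SN idxA idxB K S0 β h' := by
  induction β using Ordinal.limitRecOn with
  | zero =>
    intro h h' _
    rw [Sfun_zero, Sfun_zero]
  | add_one γ IH =>
    rw [Ordinal.add_one_eq_succ]
    intro h h' hag
    rw [Sfun_succ, Sfun_succ, IH h h' (fun γ' hγ' => hag γ' (lt_trans hγ' (Order.lt_succ γ))),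
      hag γ (Order.lt_succ γ)]
  | limit β hβ IH =>
    intro h h' hag
    rw [Sfun_limit SM SN idxA idxB K S0 hβ, Sfun_limit SM SN idxA idxB K S0 hβ]
    have heq : (fun γ => if hγ : γ < β then Sfun SM SN idxA idxB K S0 γ h else ∅) =
        (fun γ => if hγ : γ < β then Sfun SM SN idxA idxB K S0 γ h' else ∅) := by
      funext γ
      split
      · next hγ => rw [IH γ hγ h h' (fun γ' hγ' => hag γ' (lt_trans hγ' hγ))]
      · rfl
    rw [heq]

/-- Truncation of a play to its `∀`-moves before `β`. -/
def trunc1 (pl : Ordinal.{0} → (M ⊕ N) × (M ⊕ N)) (β : Ordinal.{0}) : Ordinal.{0} → M ⊕ N :=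
  fun i => if i < β then (pl i).1 else Sum.inl (Classical.arbitrary M)

/-- The stationary set attached to position `β` of the play `pl`. -/
def SP (pl : Ordinal.{0} → (M ⊕ N) × (M ⊕ N)) (β : Ordinal.{0}) : Set Ordinal.{0} :=
  Sfun SM SN idxA idxB K S0 β (trunc1 pl β)

/-- The strategy of player `∃`. -/
def sigE (β : Ordinal.{0}) (pl : Ordinal.{0} → (M ⊕ N) × (M ⊕ N)) (x : M ⊕ N) : M ⊕ N :=
  (chooseStep SM SN idxA idxB K (SP SM SN idxA idxB K S0 pl β) x).2

lemma SP_zero (pl : Ordinal.{0} → (M ⊕ N) × (M ⊕ N)) : SP SM SN idxA idxB K S0 pl 0 = S0 :=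
  Sfun_zero SM SN idxA idxB K S0 _

lemma SP_succ (pl : Ordinal.{0} → (M ⊕ N) × (M ⊕ N)) (γ : Ordinal.{0}) :
    SP SM SN idxA idxB K S0 pl (γ + 1) =
      (chooseStep SM SN idxA idxB K (SP SM SN idxA idxB K S0 pl γ) ((pl γ).1)).1 := by
  rw [SP, Ordinal.add_one_eq_succ, Sfun_succ]
  have h1 : Sfun SM SN idxA idxB K S0 γ (trunc1 pl (Order.succ γ)) =
      SP SM SN idxA idxB K S0 pl γ := by
    apply Sfun_congr
    intro γ' hγ'
    rw [trunc1, trunc1, if_pos (lt_trans hγ' (Order.lt_succ γ)), if_pos hγ']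
  have h2 : trunc1 pl (Order.succ γ) γ = (pl γ).1 := by
    rw [trunc1, if_pos (Order.lt_succ γ)]
  rw [h1, h2]

lemma SP_limit (pl : Ordinal.{0} → (M ⊕ N) × (M ⊕ N)) {β : Ordinal.{0}} (hβ : Order.IsSuccLimit β) :
    SP SM SN idxA idxB K S0 pl β =
      limChoose K S0 β (fun γ => if hγ : γ < β then SP SM SN idxA idxB K S0 pl γ else ∅) := by
  rw [SP, Sfun_limit SM SN idxA idxB K S0 hβ]
  have heq : (fun γ => if hγ : γ < β then Sfun SM SN idxA idxB K S0 γ (trunc1 pl β) else ∅) =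
      (fun γ => if hγ : γ < β then SP SM SN idxA idxB K S0 pl γ else ∅) := by
    funext γ
    split
    · next hγ =>
      apply Sfun_congr
      intro γ' hγ'
      rw [trunc1, trunc1, if_pos (lt_trans hγ' hγ), if_pos hγ']
    · rfl
  rw [heq]

end Strategy

section ExistsProofs
variable [Nonempty M] [Nonempty N]
variable {K : Set (Set Ordinal.{0})} {S0 : Set Ordinal.{0}}

variable (hidxA : Function.Injective idxA) (hidxA2 : ∀ a, idxA a < omega2)
variable (hidxB : Function.Injective idxB) (hidxB2 : ∀ b, idxB b < omega2)
variable (hK1 : ∀ S ∈ K, S ⊆ Set.Iio omega2 ∧ Omega1Stationary S)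
variable (hK2 : ∀ S : Set Ordinal.{0}, S ⊆ Set.Iio omega2 → Omega1Stationary S →
  ∃ T ∈ K, T ⊆ S)
variable (hK3 : ∀ f : ℕ → Set Ordinal.{0}, (∀ n, f n ∈ K) → (∀ n, f (n + 1) ⊆ f n) →
  ∃ S ∈ K, ∀ n, S ⊆ f n)
variable (hS0K : S0 ∈ K) (hS0 : S0 ⊆ IsoSet SM SN idxA idxB)

lemma iso_of_S0 (hS0' : S0 ⊆ IsoSet SM SN idxA idxB) {δ : Ordinal.{0}} (hδ : δ ∈ S0) :
    SetIso SM SN (Asub idxA δ) (Bsub idxB δ) := (hS0' hδ).2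

include hidxA hidxB hidxA2 hidxB2 hK1 hK2 hS0 in
lemma step_exists {S : Set Ordinal.{0}} (hSK : S ∈ K) (hSS0 : S ⊆ S0) (x : M ⊕ N) :
    ∃ p : Set Ordinal.{0} × (M ⊕ N), StepOK SM SN idxA idxB K S x p.1 p.2 := by
  have hSsub : S ⊆ Set.Iio omega2 := (hK1 S hSK).1
  have hSst : Omega1Stationary S := (hK1 S hSK).2
  cases x with
  | inl a =>
    set S' : Set Ordinal.{0} := {δ ∈ S | idxA a < δ} with hS'
    have hS'st : Omega1Stationary S' := stat_diff_bounded hSst (hidxA2 a)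
    have hS'sub : S' ⊆ Set.Iio omega2 := fun δ hδ => hSsub hδ.1
    -- the value chosen by the isomorphism at level δ
    set bv : Ordinal.{0} → N := fun δ =>
      if h : ∃ b, (a, b) ∈ gGraph SM SN idxA idxB δ ∧ b ∈ Bsub idxB δ then h.choose
      else Classical.arbitrary N with hbv
    have hbv1 : ∀ δ ∈ S', (a, bv δ) ∈ gGraph SM SN idxA idxB δ ∧ bv δ ∈ Bsub idxB δ := by
      intro δ hδ
      have hiso := iso_of_S0 SM SN idxA idxB hS0 (hSS0 hδ.1)
      have hex := g_total_A hiso (hδ.2 : idxA a < δ)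
      rw [hbv]
      dsimp only
      rw [dif_pos hex]
      exact hex.choose_spec
    obtain ⟨η, hη⟩ := fodor hS'sub hS'st (fun δ => idxB (bv δ)) (fun δ hδ => (hbv1 δ hδ).2)
    set S'' : Set Ordinal.{0} := {δ ∈ S' | idxB (bv δ) = η} with hS''
    obtain ⟨δ₀, hδ₀⟩ := stat_nonempty hη
    set b : N := bv δ₀ with hb
    have hbeq : ∀ δ ∈ S'', bv δ = b := by
      intro δ hδ
      apply hidxB
      rw [hδ.2, hb, ← hδ₀.2]
    obtain ⟨T, hTK, hTS⟩ := hK2 S'' (fun δ hδ => hS'sub hδ.1) hη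
    refine ⟨(T, Sum.inr b), hTK, fun δ hδ => ((hTS hδ).1.1 : δ ∈ S), trivial, ?_⟩
    intro δ hδ p hp
    rcases hp with ⟨h1, h2⟩ | ⟨h1, h2⟩
    · have e1 : p.1 = a := (Sum.inl.injEq _ _).mp h1.symm
      have e2 : p.2 = b := (Sum.inr.injEq _ _).mp h2.symm
      have hmem := (hbv1 δ (hTS hδ).1).1
      rw [hbeq δ (hTS hδ)] at hmem
      have hp' : p = (a, b) := Prod.ext e1 e2
      rw [hp']
      exact hmem
    · exact absurd h1 (by simp)
  | inr bb =>
    set S' : Set Ordinal.{0} := {δ ∈ S | idxB bb < δ} with hS'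
    have hS'st : Omega1Stationary S' := stat_diff_bounded hSst (hidxB2 bb)
    have hS'sub : S' ⊆ Set.Iio omega2 := fun δ hδ => hSsub hδ.1
    set av : Ordinal.{0} → M := fun δ =>
      if h : ∃ a, (a, bb) ∈ gGraph SM SN idxA idxB δ ∧ a ∈ Asub idxA δ then h.choose
      else Classical.arbitrary M with hav
    have hav1 : ∀ δ ∈ S', (av δ, bb) ∈ gGraph SM SN idxA idxB δ ∧ av δ ∈ Asub idxA δ := by
      intro δ hδ
      have hiso := iso_of_S0 SM SN idxA idxB hS0 (hSS0 hδ.1)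
      have hex := g_total_B hiso (hδ.2 : idxB bb < δ)
      rw [hav]
      dsimp only
      rw [dif_pos hex]
      exact hex.choose_spec
    obtain ⟨η, hη⟩ := fodor hS'sub hS'st (fun δ => idxA (av δ)) (fun δ hδ => (hav1 δ hδ).2)
    set S'' : Set Ordinal.{0} := {δ ∈ S' | idxA (av δ) = η} with hS''
    obtain ⟨δ₀, hδ₀⟩ := stat_nonempty hη
    set a : M := av δ₀ with ha
    have haeq : ∀ δ ∈ S'', av δ = a := by
      intro δ hδ
      apply hidxA
      rw [hδ.2, ha, ← hδ₀.2]
    obtain ⟨T, hTK, hTS⟩ := hK2 S'' (fun δ hδ => hS'sub hδ.1) hη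
    refine ⟨(T, Sum.inl a), hTK, fun δ hδ => ((hTS hδ).1.1 : δ ∈ S), trivial, ?_⟩
    intro δ hδ p hp
    rcases hp with ⟨h1, h2⟩ | ⟨h1, h2⟩
    · exact absurd h1 (by simp)
    · have e1 : p.2 = bb := (Sum.inr.injEq _ _).mp h1.symm
      have e2 : p.1 = a := (Sum.inl.injEq _ _).mp h2.symm
      have hmem := (hav1 δ (hTS hδ).1).1
      rw [haeq δ (hTS hδ)] at hmem
      have hp' : p = (a, bb) := Prod.ext e2 e1
      rw [hp']
      exact hmem

include hidxA hidxA2 hidxB hidxB2 hK1 hK2 hK3 hS0K hS0 in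
lemma SP_inv (pl : Ordinal.{0} → (M ⊕ N) × (M ⊕ N)) : ∀ β < omega1,
    SP SM SN idxA idxB K S0 pl β ∈ K ∧ SP SM SN idxA idxB K S0 pl β ⊆ S0 ∧
      ∀ γ < β, SP SM SN idxA idxB K S0 pl β ⊆ SP SM SN idxA idxB K S0 pl γ := by
  intro β
  induction β using Ordinal.limitRecOn with
  | zero =>
    intro _
    rw [SP_zero]
    exact ⟨hS0K, subset_refl _, fun γ hγ => absurd hγ not_lt_zero⟩
  | add_one γ IH =>
    rw [Ordinal.add_one_eq_succ]
    intro hβ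
    have hγ : γ < omega1 := lt_trans (Order.lt_succ γ) hβ
    obtain ⟨h1, h2, h3⟩ := IH hγ
    have hstep := chooseStep_spec SM SN idxA idxB K
      (step_exists SM SN idxA idxB hidxA hidxA2 hidxB hidxB2 hK1 hK2 hS0 h1 h2 ((pl γ).1))
    rw [← Ordinal.add_one_eq_succ, SP_succ]
    refine ⟨hstep.1, subset_trans hstep.2.1 h2, ?_⟩
    intro γ' hγ'
    rcases eq_or_lt_of_le (Order.lt_succ_iff.mp hγ') with rfl | hlt
    · exact hstep.2.1
    · exact subset_trans hstep.2.1 (h3 γ' hlt)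
  | limit β hβlim IH =>
    intro hβ
    obtain ⟨e, he1, he2⟩ := exists_nat_cofinal (ne_of_gt hβlim.pos) hβ
    set m : ℕ → Ordinal.{0} := fun n => Nat.rec (e 0) (fun n mn => max mn (e (n + 1))) n with hm
    have hm0 : m 0 = e 0 := rfl
    have hmsucc : ∀ n, m (n + 1) = max (m n) (e (n + 1)) := fun n => rfl
    have hmlt : ∀ n, m n < β := by
      intro n
      induction n with
      | zero => rw [hm0]; exact he1 0
      | succ n ih => rw [hmsucc]; exact max_lt ih (he1 (n + 1))
    have hmle : ∀ n, e n ≤ m n := by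
      intro n
      cases n with
      | zero => rw [hm0]
      | succ n => rw [hmsucc]; exact le_max_right _ _
    have hmmono : ∀ n, m n ≤ m (n + 1) := fun n => by rw [hmsucc]; exact le_max_left _ _
    have hSPsub : ∀ γ γ', γ' ≤ γ → γ < β →
        SP SM SN idxA idxB K S0 pl γ ⊆ SP SM SN idxA idxB K S0 pl γ' := by
      intro γ γ' hle hlt
      rcases eq_or_lt_of_le hle with rfl | h
      · exact subset_refl _
      · exact (IH γ hlt (lt_trans hlt hβ)).2.2 γ' h
    obtain ⟨Sstar, hSstarK, hSstar⟩ := hK3 (fun n => SP SM SN idxA idxB K S0 pl (m n))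
      (fun n => (IH (m n) (hmlt n) (lt_trans (hmlt n) hβ)).1)
      (fun n => hSPsub (m (n + 1)) (m n) (hmmono n) (hmlt (n + 1)))
    have hex : ∃ T, T ∈ K ∧ ∀ γ < β, T ⊆
        (fun γ => if hγ : γ < β then SP SM SN idxA idxB K S0 pl γ else ∅) γ := by
      refine ⟨Sstar, hSstarK, ?_⟩
      intro γ hγ
      dsimp only
      rw [dif_pos hγ]
      obtain ⟨n, rfl⟩ := he2 γ hγ
      exact subset_trans (hSstar n) (hSPsub (m n) (e n) (hmle n) (hmlt n))
    rw [SP_limit SM SN idxA idxB K S0 pl hβlim]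
    have hspec := limChoose_spec K S0 hex
    have hsub : ∀ γ < β, limChoose K S0 β
        (fun γ => if hγ : γ < β then SP SM SN idxA idxB K S0 pl γ else ∅) ⊆
          SP SM SN idxA idxB K S0 pl γ := by
      intro γ hγ
      have := hspec.2 γ hγ
      rwa [dif_pos hγ] at this
    refine ⟨hspec.1, ?_, hsub⟩
    have := hsub 0 hβlim.pos
    rwa [SP_zero] at this

include hidxA hidxA2 hidxB hidxB2 hK1 hK2 hK3 hS0K hS0 in
lemma SP_mono (pl : Ordinal.{0} → (M ⊕ N) × (M ⊕ N)) {γ β : Ordinal.{0}} (h : γ ≤ β)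
    (hβ : β < omega1) : SP SM SN idxA idxB K S0 pl β ⊆ SP SM SN idxA idxB K S0 pl γ := by
  rcases eq_or_lt_of_le h with rfl | hlt
  · exact subset_refl _
  · exact (SP_inv SM SN idxA idxB hidxA hidxA2 hidxB hidxB2 hK1 hK2 hK3 hS0K hS0 pl β hβ).2.2 γ hlt

include hidxA hidxA2 hidxB hidxB2 hK1 hK2 hK3 hS0K hS0 in
lemma SP_pairs (pl : Ordinal.{0} → (M ⊕ N) × (M ⊕ N))
    (hpl : ∀ β < omega1, (pl β).2 = sigE SM SN idxA idxB K S0 β pl (pl β).1)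
    (i : Ordinal.{0}) (hi : i < omega1) :
    ∀ δ ∈ SP SM SN idxA idxB K S0 pl (i + 1),
      pairRel (pl i).1 (pl i).2 ⊆ gGraph SM SN idxA idxB δ := by
  intro δ hδ
  have hinv := SP_inv SM SN idxA idxB hidxA hidxA2 hidxB hidxB2 hK1 hK2 hK3 hS0K hS0 pl i hi
  have hstep := chooseStep_spec SM SN idxA idxB K
    (step_exists SM SN idxA idxB hidxA hidxA2 hidxB hidxB2 hK1 hK2 hS0 hinv.1 hinv.2.1 ((pl i).1))
  rw [SP_succ] at hδ
  rw [hpl i hi, sigE]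
  exact hstep.2.2.2 δ hδ

include hidxA hidxA2 hidxB hidxB2 hK1 hK2 hK3 hS0K hS0 in
theorem exists_wins : ExistsWinsEF L SM SN omega1 := by
  refine ⟨sigE SM SN idxA idxB K S0, ?_, ?_⟩
  · intro β pl pl' x hag
    rw [sigE, sigE]
    have heq : SP SM SN idxA idxB K S0 pl β = SP SM SN idxA idxB K S0 pl' β := by
      rw [SP, SP]
      apply Sfun_congr
      intro γ hγ
      rw [trunc1, trunc1, if_pos hγ, if_pos hγ, hag γ hγ]
    rw [heq]
  · intro pl hpl
    have hSPne : ∀ β < omega1, (SP SM SN idxA idxB K S0 pl β).Nonempty := by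
      intro β hβ
      exact stat_nonempty (hK1 _ (SP_inv SM SN idxA idxB hidxA hidxA2 hidxB hidxB2 hK1 hK2 hK3
        hS0K hS0 pl β hβ).1).2
    have hSPiso : ∀ β < omega1, ∀ δ ∈ SP SM SN idxA idxB K S0 pl β,
        SetIso SM SN (Asub idxA δ) (Bsub idxB δ) := by
      intro β hβ δ hδ
      exact iso_of_S0 SM SN idxA idxB hS0 ((SP_inv SM SN idxA idxB hidxA hidxA2 hidxB hidxB2
        hK1 hK2 hK3 hS0K hS0 pl β hβ).2.1 hδ)
    have hround : ∀ p : M × N, p ∈ playRel omega1 pl →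
        ∃ i < omega1, p ∈ pairRel (pl i).1 (pl i).2 := by
      intro p hp
      rw [playRel] at hp
      simp only [Set.mem_iUnion, Set.mem_Iio] at hp
      obtain ⟨i, hi, hpi⟩ := hp
      exact ⟨i, hi, hpi⟩
    have hgmem : ∀ (p : M × N) (i : Ordinal.{0}), i < omega1 →
        p ∈ pairRel (pl i).1 (pl i).2 → ∀ (k : Ordinal.{0}), i + 1 ≤ k → k < omega1 →
        ∀ δ ∈ SP SM SN idxA idxB K S0 pl k, p ∈ gGraph SM SN idxA idxB δ := by
      intro p i hi hpi k hk1 hk2 δ hδ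
      have hδ' : δ ∈ SP SM SN idxA idxB K S0 pl (i + 1) :=
        SP_mono SM SN idxA idxB hidxA hidxA2 hidxB hidxB2 hK1 hK2 hK3 hS0K hS0 pl hk1 hk2 hδ
      exact SP_pairs SM SN idxA idxB hidxA hidxA2 hidxB hidxB2 hK1 hK2 hK3 hS0K hS0 pl hpl
        i hi δ hδ' hpi
    refine ⟨fun β hβ => by rw [hpl β hβ, sigE]; exact chooseStep_opp SM SN idxA idxB K _ _, ?_, ?_⟩
    · -- injectivity / functionality
      intro p hp q hq
      obtain ⟨i, hi, hpi⟩ := hround p hp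
      obtain ⟨j, hj, hqj⟩ := hround q hq
      set k : Ordinal.{0} := max i j + 1 with hk
      have hkω : k < omega1 := add_one_lt_omega1 (max_lt hi hj)
      obtain ⟨δ, hδ⟩ := hSPne k hkω
      have hpg := hgmem p i hi hpi k (add_le_add_left (le_max_left i j) 1) hkω δ hδ
      have hqg := hgmem q j hj hqj k (add_le_add_left (le_max_right i j) 1) hkω δ hδ
      exact g_iff (hSPiso k hkω δ hδ) hpg hqg
    · -- relations
      intro n R a b hab
      have hr : ∀ i : Fin n, ∃ r, r < omega1 ∧ (a i, b i) ∈ pairRel (pl r).1 (pl r).2 := by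
        intro i
        obtain ⟨r, hr1, hr2⟩ := hround (a i, b i) (hab i)
        exact ⟨r, hr1, hr2⟩
      choose r hr1 hr2 using hr
      set k : Ordinal.{0} := Finset.sup Finset.univ (fun i => r i + 1) with hk
      have hkω : k < omega1 := by
        rw [hk]
        rw [Finset.sup_lt_iff (show (⊥ : Ordinal.{0}) < omega1 from omega1_pos)]
        intro i _
        exact add_one_lt_omega1 (hr1 i)
      obtain ⟨δ, hδ⟩ := hSPne k hkω
      apply g_rel (hSPiso k hkω δ hδ)
      intro i
      exact hgmem (a i, b i) (r i) (hr1 i) (hr2 i) k (Finset.le_sup (f := fun i => r i + 1) (Finset.mem_univ i)) hkω δ hδ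

end ExistsProofs

noncomputable section ForallSide
open Cardinal Ordinal Set Classical

variable {L : FirstOrder.Language.{u, v}} {M N : Type w}
  (SM : L.Structure M) (SN : L.Structure N)
  (idxA : M → Ordinal.{0}) (idxB : N → Ordinal.{0})
/-- Opp helpers. -/
lemma opp_inl {a : M} {y : M ⊕ N} (h : Opp (Sum.inl a) y) : ∃ b, y = Sum.inr b := by
  cases y with
  | inl c => exact ((h : False)).elim
  | inr b => exact ⟨b, rfl⟩

lemma opp_inr {b : N} {y : M ⊕ N} (h : Opp (Sum.inr b) y) : ∃ a, y = Sum.inl a := by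
  cases y with
  | inl a => exact ⟨a, rfl⟩
  | inr c => exact ((h : False)).elim

variable [Nonempty M] [Nonempty N]
variable (C : Set Ordinal.{0}) (cp : Ordinal.{0} → Ordinal.{0} × Ordinal.{0})

/-- Combined index on `M ⊕ N`. -/
def eIdx : M ⊕ N → Ordinal.{0} := Sum.elim idxA idxB

/-- Choice of an element of `C` at or above `u`. -/
def nextC (u : Ordinal.{0}) : Ordinal.{0} :=
  if h : ∃ x ∈ C, u ≤ x then h.choose else 0

lemma nextC_spec {u : Ordinal.{0}} (h : ∃ x ∈ C, u ≤ x) :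
    nextC C u ∈ C ∧ u ≤ nextC C u := by
  rw [nextC, dif_pos h]
  exact ⟨h.choose_spec.1, h.choose_spec.2⟩

/-- Bound for the indices appearing in one round of a play. -/
def pairBound (q : (M ⊕ N) × (M ⊕ N)) : Ordinal.{0} :=
  max (eIdx idxA idxB q.1) (eIdx idxA idxB q.2) + 1

/-- The increasing sequence of levels used by `∀`, defined from the history. -/
def dseq (h : Ordinal.{0} → (M ⊕ N) × (M ⊕ N)) : Ordinal.{0} → Ordinal.{0} :=
  Ordinal.lt_wf.fix (fun β ih =>
    nextC C (Ordinal.bsup β (fun γ hγ => max (ih γ hγ + 1) (pairBound idxA idxB (h γ)))))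

lemma dseq_eq (h : Ordinal.{0} → (M ⊕ N) × (M ⊕ N)) (β : Ordinal.{0}) :
    dseq idxA idxB C h β = nextC C (Ordinal.bsup β
      (fun γ _ => max (dseq idxA idxB C h γ + 1) (pairBound idxA idxB (h γ)))) :=
  Ordinal.lt_wf.fix_eq _ β

lemma dseq_congr (h h' : Ordinal.{0} → (M ⊕ N) × (M ⊕ N)) (β : Ordinal.{0})
    (hag : ∀ γ < β, h γ = h' γ) : dseq idxA idxB C h β = dseq idxA idxB C h' β := by
  induction β using Ordinal.induction with
  | _ β IH =>
    rw [dseq_eq, dseq_eq]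
    congr 1
    congr 1
    funext γ hγ
    rw [IH γ hγ (fun γ' hγ' => hag γ' (lt_trans hγ' hγ)), hag γ hγ]

section dseqProps
variable (hidxA2 : ∀ a, idxA a < omega2) (hidxB2 : ∀ b, idxB b < omega2) (hC : UClub C)

include hidxA2 hidxB2 in
lemma pairBound_lt (q : (M ⊕ N) × (M ⊕ N)) : pairBound idxA idxB q < omega2 := by
  rw [pairBound, Ordinal.add_one_eq_succ]
  apply omega2_isLimit.succ_lt
  apply max_lt
  · cases q.1 with
    | inl a => exact hidxA2 a
    | inr b => exact hidxB2 b
  · cases q.2 with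
    | inl a => exact hidxA2 a
    | inr b => exact hidxB2 b

include hidxA2 hidxB2 hC in
lemma dseq_props (h : Ordinal.{0} → (M ⊕ N) × (M ⊕ N)) : ∀ β < omega1,
    (dseq idxA idxB C h β ∈ C ∧ dseq idxA idxB C h β < omega2) ∧
    ∀ γ < β, dseq idxA idxB C h γ < dseq idxA idxB C h β ∧
      pairBound idxA idxB (h γ) ≤ dseq idxA idxB C h β := by
  intro β
  induction β using Ordinal.induction with
  | _ β IH =>
    intro hβ
    set u : Ordinal.{0} := Ordinal.bsup β
      (fun γ _ => max (dseq idxA idxB C h γ + 1) (pairBound idxA idxB (h γ))) with hu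
    have hult : u < omega2 := by
      apply bsup_lt_omega2 (card_le_aleph1_of_lt_omega2 (lt_trans hβ omega1_lt_omega2))
      intro γ hγ
      apply max_lt
      · rw [Ordinal.add_one_eq_succ]
        exact omega2_isLimit.succ_lt ((IH γ hγ (lt_trans hγ hβ)).1.2)
      · exact pairBound_lt idxA idxB hidxA2 hidxB2 _
    have hnext := nextC_spec C (hC.2.2 u hult)
    rw [dseq_eq]
    refine ⟨⟨hnext.1, hC.1 hnext.1⟩, ?_⟩
    intro γ hγ
    constructor
    · calc dseq idxA idxB C h γ < dseq idxA idxB C h γ + 1 := lt_add_one _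
        _ ≤ max (dseq idxA idxB C h γ + 1) (pairBound idxA idxB (h γ)) := le_max_left _ _
        _ ≤ u := Ordinal.le_bsup _ γ hγ
        _ ≤ _ := hnext.2
    · calc pairBound idxA idxB (h γ)
          ≤ max (dseq idxA idxB C h γ + 1) (pairBound idxA idxB (h γ)) := le_max_right _ _
        _ ≤ u := Ordinal.le_bsup _ γ hγ
        _ ≤ _ := hnext.2

end dseqProps

/-- A function `Iio ω₁ → M ⊕ N` covering all elements of index `< δ`. -/
def usur (δ : Ordinal.{0}) : Ordinal.{0} → M ⊕ N :=
  if h : ∃ f : Ordinal.{0} → M ⊕ N, ∀ z, eIdx idxA idxB z < δ → ∃ ξ < omega1, f ξ = z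
  then h.choose else fun _ => Sum.inl (Classical.arbitrary M)

/-- Explicit injection of the small elements into two copies of `Iio δ`. -/
def J1fun (δ : Ordinal.{0}) : {z : M ⊕ N // eIdx idxA idxB z < δ} →
    ((Set.Iio δ) ⊕ (Set.Iio δ) : Type 1)
  | ⟨Sum.inl a, h⟩ => Sum.inl ⟨idxA a, h⟩
  | ⟨Sum.inr b, h⟩ => Sum.inr ⟨idxB b, h⟩

lemma exists_cover (hidxA : Function.Injective idxA) (hidxB : Function.Injective idxB)
    {δ : Ordinal.{0}} (hδ : δ < omega2) :
    ∃ f : Ordinal.{0} → M ⊕ N, ∀ z, eIdx idxA idxB z < δ → ∃ ξ < omega1, f ξ = z := by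
  -- an injection of the relevant elements into `Iio ω₁`
  have hcard : Cardinal.mk ((Set.Iio δ) ⊕ (Set.Iio δ) : Type 1) ≤
      Cardinal.mk (Set.Iio omega1) := by
    rw [Cardinal.mk_sum]
    simp only [Cardinal.lift_id]
    rw [mk_Iio_eq, mk_Iio_eq, omega1, Cardinal.card_ord, ← Cardinal.lift_add]
    apply Cardinal.lift_le.mpr
    calc δ.card + δ.card ≤ Cardinal.aleph 1 + Cardinal.aleph 1 :=
          add_le_add (card_le_aleph1_of_lt_omega2 hδ) (card_le_aleph1_of_lt_omega2 hδ)
      _ = Cardinal.aleph 1 := Cardinal.add_eq_self (Cardinal.aleph0_le_aleph 1)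
  obtain ⟨emb⟩ := Cardinal.le_def _ _ |>.mp hcard
  have hJ1inj : ∀ z z' : {z : M ⊕ N // eIdx idxA idxB z < δ},
      J1fun idxA idxB δ z = J1fun idxA idxB δ z' → z = z' := by
    rintro ⟨z, hz⟩ ⟨z', hz'⟩ h
    cases z with
    | inl a => cases z' with
      | inl a' =>
        simp only [J1fun, Sum.inl.injEq] at h
        have hv := hidxA (congrArg Subtype.val h)
        exact Subtype.ext (by simp [hv])
      | inr b' => simp only [J1fun] at h; exact absurd h (by simp)
    | inr b => cases z' with
      | inl a' => simp only [J1fun] at h; exact absurd h (by simp)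
      | inr b' =>
        simp only [J1fun, Sum.inr.injEq] at h
        have hv := hidxB (congrArg Subtype.val h)
        exact Subtype.ext (by simp [hv])
  set J : {z : M ⊕ N // eIdx idxA idxB z < δ} → Set.Iio omega1 :=
    fun z => emb (J1fun idxA idxB δ z) with hJ
  have hJinj : ∀ z z' : {z : M ⊕ N // eIdx idxA idxB z < δ}, J z = J z' → z = z' :=
    fun z z' h => hJ1inj z z' (emb.injective h)
  refine ⟨fun ξ => if h : ∃ z : {z : M ⊕ N // eIdx idxA idxB z < δ}, ((J z : Ordinal.{0})) = ξ
    then (h.choose : M ⊕ N) else Sum.inl (Classical.arbitrary M), ?_⟩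
  intro z hz
  refine ⟨(J ⟨z, hz⟩ : Ordinal.{0}), (J ⟨z, hz⟩).2, ?_⟩
  have hex : ∃ z' : {z : M ⊕ N // eIdx idxA idxB z < δ},
      ((J z' : Ordinal.{0})) = (J ⟨z, hz⟩ : Ordinal.{0}) := ⟨⟨z, hz⟩, rfl⟩
  dsimp only
  rw [dif_pos hex]
  have heq := hJinj _ _ (Subtype.ext hex.choose_spec)
  rw [heq]

lemma usur_spec (hidxA : Function.Injective idxA) (hidxB : Function.Injective idxB)
    {δ : Ordinal.{0}} (hδ : δ < omega2) :
    ∀ z, eIdx idxA idxB z < δ → ∃ ξ < omega1, usur idxA idxB δ ξ = z := by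
  rw [usur, dif_pos (exists_cover idxA idxB hidxA hidxB hδ)]
  exact (exists_cover idxA idxB hidxA hidxB hδ).choose_spec


/-- The scheduling function: which coded pair is processed at round `β`. -/
def sched : Ordinal.{0} → Ordinal.{0} :=
  Ordinal.lt_wf.fix (fun β ih =>
    sInf {α | α < omega1 ∧ (cp α).1 ≤ β ∧ ∀ γ (hγ : γ < β), ih γ hγ ≠ α})

lemma sched_eq (β : Ordinal.{0}) :
    sched cp β = sInf {α | α < omega1 ∧ (cp α).1 ≤ β ∧ ∀ γ < β, sched cp γ ≠ α} :=
  Ordinal.lt_wf.fix_eq _ β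

section schedProps
variable (hcp1 : ∀ α < omega1, (cp α).1 < omega1 ∧ (cp α).2 < omega1)
variable (hcp2 : ∀ γ ξ, γ < omega1 → ξ < omega1 → ∃ α < omega1, cp α = (γ, ξ))
variable (hcp3 : ∀ α α', α < omega1 → α' < omega1 → cp α = cp α' → α = α')

include hcp2 hcp3 in
lemma sched_mem {β : Ordinal.{0}} (hβ : β < omega1) :
    sched cp β < omega1 ∧ (cp (sched cp β)).1 ≤ β ∧ ∀ γ < β, sched cp γ ≠ sched cp β := by
  rw [sched_eq]
  have hne : {α | α < omega1 ∧ (cp α).1 ≤ β ∧ ∀ γ < β, sched cp γ ≠ α}.Nonempty := by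
    by_contra hemp
    rw [Set.not_nonempty_iff_eq_empty] at hemp
    -- every candidate coding `(0, ξ)` is hit by `sched` below `β`
    set av : Ordinal.{0} → Ordinal.{0} := fun ξ =>
      if h : ∃ α < omega1, cp α = (0, ξ) then h.choose else 0 with hav
    have hav1 : ∀ ξ < omega1, av ξ < omega1 ∧ cp (av ξ) = (0, ξ) := by
      intro ξ hξ
      have h := hcp2 0 ξ omega1_pos hξ
      rw [hav]
      dsimp only
      rw [dif_pos h]
      exact h.choose_spec
    set F : Ordinal.{0} → Ordinal.{0} := fun ξ =>
      if h : ∃ γ < β, sched cp γ = av ξ then h.choose else 0 with hF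
    have hF1 : ∀ ξ < omega1, F ξ < β ∧ sched cp (F ξ) = av ξ := by
      intro ξ hξ
      have hmem : av ξ ∉ {α | α < omega1 ∧ (cp α).1 ≤ β ∧ ∀ γ < β, sched cp γ ≠ α} := by
        rw [hemp]; exact Set.notMem_empty _
      simp only [Set.mem_setOf_eq, not_and, not_forall] at hmem
      have h1 := hav1 ξ hξ
      have h2 := hmem h1.1 (by rw [h1.2]; exact zero_le)
      obtain ⟨γ, hγ, hγ2⟩ := h2
      have h : ∃ γ < β, sched cp γ = av ξ := ⟨γ, hγ, not_not.mp hγ2⟩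
      rw [hF]
      dsimp only
      rw [dif_pos h]
      exact h.choose_spec
    apply no_inj_omega1 hβ F (fun ξ hξ => (hF1 ξ hξ).1)
    intro ξ ξ' hξ hξ' hFeq
    have e1 : av ξ = av ξ' := by
      rw [← (hF1 ξ hξ).2, ← (hF1 ξ' hξ').2, hFeq]
    have e2 : cp (av ξ) = cp (av ξ') := by rw [e1]
    rw [(hav1 ξ hξ).2, (hav1 ξ' hξ').2] at e2
    exact (Prod.ext_iff.mp e2).2
  have hmem := csInf_mem hne
  exact ⟨hmem.1, hmem.2.1, hmem.2.2⟩

include hcp1 hcp2 hcp3 in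
lemma sched_surj {α : Ordinal.{0}} (hα : α < omega1) : ∃ β < omega1, sched cp β = α := by
  by_contra hno
  push_neg at hno
  set γ₀ : Ordinal.{0} := (cp α).1 with hγ₀
  have hγ₀1 : γ₀ < omega1 := (hcp1 α hα).1
  have hlt : ∀ β, γ₀ ≤ β → β < omega1 → sched cp β < α := by
    intro β h1 h2
    have hmem : α ∈ {α' | α' < omega1 ∧ (cp α').1 ≤ β ∧ ∀ γ < β, sched cp γ ≠ α'} :=
      ⟨hα, h1, fun γ hγ => hno γ (lt_trans hγ h2)⟩
    have hle : sched cp β ≤ α := by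
      rw [sched_eq]
      exact csInf_le (OrderBot.bddBelow _) hmem
    exact lt_of_le_of_ne hle (hno β h2)
  apply no_inj_omega1 hα (fun ξ => sched cp (γ₀ + ξ))
  · intro ξ hξ
    exact hlt (γ₀ + ξ) (le_self_add) (add_lt_omega1 hγ₀1 hξ)
  · intro ξ ξ' hξ hξ' heq
    by_contra hne
    rcases lt_or_gt_of_ne hne with h | h
    · exact (sched_mem cp hcp2 hcp3 (add_lt_omega1 hγ₀1 hξ')).2.2 (γ₀ + ξ)
        (by rwa [add_lt_add_iff_left]) heq
    · exact (sched_mem cp hcp2 hcp3 (add_lt_omega1 hγ₀1 hξ)).2.2 (γ₀ + ξ')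
        (by rwa [add_lt_add_iff_left]) heq.symm

end schedProps

/-- Truncation of a play to its rounds before `β`. -/
def trunc2 (pl : Ordinal.{0} → (M ⊕ N) × (M ⊕ N)) (β : Ordinal.{0}) :
    Ordinal.{0} → (M ⊕ N) × (M ⊕ N) :=
  fun i => if i < β then pl i else (Sum.inl (Classical.arbitrary M), Sum.inl (Classical.arbitrary M))

/-- The strategy of player `∀`. -/
def sigA (β : Ordinal.{0}) (pl : Ordinal.{0} → (M ⊕ N) × (M ⊕ N)) : M ⊕ N :=
  usur idxA idxB (dseq idxA idxB C (trunc2 pl β) ((cp (sched cp β)).1)) ((cp (sched cp β)).2)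


section ForallProof
variable (hidxA : Function.Injective idxA) (hidxA2 : ∀ a, idxA a < omega2)
variable (hidxB : Function.Injective idxB) (hidxB2 : ∀ b, idxB b < omega2)
variable (hC : UClub C) (hdisj : ∀ δ ∈ C, δ ∉ IsoSet SM SN idxA idxB)
variable (hcp1 : ∀ α < omega1, (cp α).1 < omega1 ∧ (cp α).2 < omega1)
variable (hcp2 : ∀ γ ξ, γ < omega1 → ξ < omega1 → ∃ α < omega1, cp α = (γ, ξ))
variable (hcp3 : ∀ α α', α < omega1 → α' < omega1 → cp α = cp α' → α = α')

include hidxA hidxA2 hidxB hidxB2 hC hdisj hcp1 hcp2 hcp3 in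
theorem forall_wins : ForallWinsEF L SM SN omega1 := by
  refine ⟨sigA idxA idxB C cp, ?_, ?_⟩
  · intro β pl pl' hag
    rw [sigA, sigA]
    have heq : trunc2 pl β = trunc2 pl' β := by
      funext i
      rw [trunc2, trunc2]
      split
      · next h => rw [hag i h]
      · rfl
    rw [heq]
  · intro pl hpl hwin
    obtain ⟨hOpp, hfunc, hrel⟩ := hwin
    set D : Ordinal.{0} → Ordinal.{0} := fun γ => dseq idxA idxB C (trunc2 pl γ) γ with hD
    have hcongr : ∀ γ β : Ordinal.{0}, γ ≤ β →
        dseq idxA idxB C (trunc2 pl β) γ = D γ := by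
      intro γ β h
      apply dseq_congr
      intro γ' hγ'
      rw [trunc2, trunc2, if_pos (lt_of_lt_of_le hγ' h), if_pos hγ']
    have hDmono : StrictMonoOn D (Set.Iio omega1) := by
      intro γ hγ β hβ hlt
      have h := ((dseq_props idxA idxB C hidxA2 hidxB2 hC (trunc2 pl β) β hβ).2 γ hlt).1
      rwa [hcongr γ β (le_of_lt hlt)] at h
    have hDC : ∀ γ < omega1, D γ ∈ C := fun γ hγ =>
      (dseq_props idxA idxB C hidxA2 hidxB2 hC (trunc2 pl γ) γ hγ).1.1
    set δs : Ordinal.{0} := sSup (D '' Set.Iio omega1) with hδs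
    have hδsC : δs ∈ C := hC.2.1 D hDmono hDC
    have hδs2 : δs < omega2 := hC.1 hδsC
    have hDle : ∀ γ < omega1, D γ ≤ δs := fun γ hγ => le_sSup_image hγ
    have hcomp : ∀ γ < omega1, eIdx idxA idxB (pl γ).1 < δs ∧
        eIdx idxA idxB (pl γ).2 < δs := by
      intro γ hγ
      have hγ1 : γ + 1 < omega1 := add_one_lt_omega1 hγ
      have hpb := ((dseq_props idxA idxB C hidxA2 hidxB2 hC (trunc2 pl (γ + 1))
        (γ + 1) hγ1).2 γ (lt_add_one γ)).2
      have htr : trunc2 pl (γ + 1) γ = pl γ := if_pos (lt_add_one γ)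
      rw [htr] at hpb
      have hb : pairBound idxA idxB (pl γ) ≤ δs := le_trans hpb (hDle (γ + 1) hγ1)
      constructor
      · exact lt_of_lt_of_le (lt_of_le_of_lt (le_max_left _ _) (lt_add_one _)) hb
      · exact lt_of_lt_of_le (lt_of_le_of_lt (le_max_right _ _) (lt_add_one _)) hb
    have htot : ∀ z : M ⊕ N, eIdx idxA idxB z < δs → ∃ β < omega1, (pl β).1 = z := by
      intro z hz
      obtain ⟨γ₀, hγ₀, hγ₀2⟩ := exists_lt_of_lt_sSup_image (ne_of_gt omega1_pos) hz
      have hDγ₀ : D γ₀ < omega2 := hC.1 (hDC γ₀ hγ₀)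
      obtain ⟨ξ, hξ, hξ2⟩ := usur_spec idxA idxB hidxA hidxB hDγ₀ z hγ₀2
      obtain ⟨α, hα, hα2⟩ := hcp2 γ₀ ξ hγ₀ hξ
      obtain ⟨β, hβ, hβ2⟩ := sched_surj cp hcp1 hcp2 hcp3 hα
      refine ⟨β, hβ, ?_⟩
      have hγ₀β : γ₀ ≤ β := by
        have h := (sched_mem cp hcp2 hcp3 hβ).2.1
        rwa [hβ2, hα2] at h
      rw [hpl β hβ, sigA, hβ2, hα2]
      simp only
      rw [hcongr γ₀ β hγ₀β]
      exact hξ2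
    have hπ : ∀ p : M × N, p ∈ playRel omega1 pl →
        p.1 ∈ Asub idxA δs ∧ p.2 ∈ Bsub idxB δs := by
      intro p hp
      simp only [playRel, Set.mem_iUnion, Set.mem_Iio] at hp
      obtain ⟨i, hi, hpi⟩ := hp
      rcases hpi with ⟨h1, h2⟩ | ⟨h1, h2⟩
      · have ha := (hcomp i hi).1
        have hb := (hcomp i hi).2
        rw [h1] at ha
        rw [h2] at hb
        exact ⟨ha, hb⟩
      · have ha := (hcomp i hi).2
        have hb := (hcomp i hi).1
        rw [h2] at ha
        rw [h1] at hb
        exact ⟨ha, hb⟩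
    have hsurjA : ∀ a : (Asub idxA δs), ∃ b : (Bsub idxB δs),
        ((a : M), (b : N)) ∈ playRel omega1 pl := by
      intro a
      obtain ⟨β, hβ, hβ2⟩ := htot (Sum.inl (a : M)) a.2
      have hOppβ := hOpp β hβ
      rw [hβ2] at hOppβ
      obtain ⟨b, hb⟩ := opp_inl hOppβ
      have hmem : ((a : M), b) ∈ pairRel (pl β).1 (pl β).2 := Or.inl ⟨hβ2, hb⟩
      have hmem2 : ((a : M), b) ∈ playRel omega1 pl := by
        simp only [playRel, Set.mem_iUnion, Set.mem_Iio]
        exact ⟨β, hβ, hmem⟩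
      exact ⟨⟨b, (hπ _ hmem2).2⟩, hmem2⟩
    have hsurjB : ∀ b : (Bsub idxB δs), ∃ a : (Asub idxA δs),
        ((a : M), (b : N)) ∈ playRel omega1 pl := by
      intro b
      obtain ⟨β, hβ, hβ2⟩ := htot (Sum.inr (b : N)) b.2
      have hOppβ := hOpp β hβ
      rw [hβ2] at hOppβ
      obtain ⟨a, ha⟩ := opp_inr hOppβ
      have hmem : (a, (b : N)) ∈ pairRel (pl β).1 (pl β).2 := Or.inr ⟨hβ2, ha⟩
      have hmem2 : (a, (b : N)) ∈ playRel omega1 pl := by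
        simp only [playRel, Set.mem_iUnion, Set.mem_Iio]
        exact ⟨β, hβ, hmem⟩
      exact ⟨⟨a, (hπ _ hmem2).1⟩, hmem2⟩
    choose tf htf using hsurjA
    choose tg htg using hsurjB
    have hleft : ∀ a, tg (tf a) = a := by
      intro a
      have h1 := htf a
      have h2 := htg (tf a)
      exact Subtype.ext ((hfunc _ h2 _ h1).mpr rfl)
    have hright : ∀ b, tf (tg b) = b := by
      intro b
      have h1 := htg b
      have h2 := htf (tg b)
      exact Subtype.ext ((hfunc _ h2 _ h1).mp rfl)
    have hiso : δs ∈ IsoSet SM SN idxA idxB := by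
      refine ⟨hδs2, ⟨Equiv.mk tf tg hleft hright, ?_⟩⟩
      intro n R v
      exact hrel n R (fun i => ((v i : M))) (fun i => ((tf (v i) : N)))
        (fun i => htf (v i))
    exact hdisj δs hδsC hiso

end ForallProof

end ForallSide


noncomputable section Glue
open Cardinal Ordinal Set Classical

lemma exists_idx {α : Type w} (h : Cardinal.mk α ≤ Cardinal.aleph 2) :
    ∃ f : α → Ordinal.{0}, Function.Injective f ∧ ∀ a, f a < omega2 := by
  have h1 : Cardinal.lift.{1} (Cardinal.mk α) ≤
      Cardinal.lift.{w} (Cardinal.mk (Set.Iio omega2)) := by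
    rw [mk_Iio_eq, omega2, Cardinal.card_ord, Cardinal.lift_lift]
    calc Cardinal.lift.{1} (Cardinal.mk α) ≤ Cardinal.lift.{1} (Cardinal.aleph 2) :=
          Cardinal.lift_le.mpr h
      _ = Cardinal.aleph 2 := by rw [Cardinal.lift_aleph]; norm_num
      _ = Cardinal.lift.{max 1 w} (Cardinal.aleph 2) := by rw [Cardinal.lift_aleph]; norm_num
  obtain ⟨e⟩ := Cardinal.lift_mk_le'.mp h1
  refine ⟨fun a => (e a).1, ?_, fun a => (e a).2⟩
  intro a a' haa
  exact e.injective (Subtype.ext haa)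


end Glue

/-- `I*(ω)` implies that `EF_{ω₁}(𝒜, ℬ)` is determined for all structures
`𝒜`, `ℬ` of cardinality `≤ ℵ₂` in a common relational vocabulary. -/
theorem EF_determined_of_IStar (hI : IStarOmega)
    (L : FirstOrder.Language.{u, v}) [L.IsRelational]
    {M N : Type w} (SM : L.Structure M) (SN : L.Structure N)
    (hM : Cardinal.mk M ≤ Cardinal.aleph 2) (hN : Cardinal.mk N ≤ Cardinal.aleph 2) :
    ExistsWinsEF L SM SN omega1 ∨ ForallWinsEF L SM SN omega1 := by
  by_cases hMne : Nonempty M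
  · by_cases hNne : Nonempty N
    · -- main case
      obtain ⟨idxA, hidxA, hidxA2⟩ := exists_idx hM
      obtain ⟨idxB, hidxB, hidxB2⟩ := exists_idx hN
      by_cases hstat : Omega1Stationary (IsoSet SM SN idxA idxB)
      · left
        obtain ⟨K, hK1, hK2, hK3⟩ := hI
        obtain ⟨S0, hS0K, hS0⟩ := hK2 (IsoSet SM SN idxA idxB)
          (fun δ hδ => hδ.1) hstat
        exact exists_wins SM SN idxA idxB hidxA hidxA2 hidxB hidxB2 hK1 hK2 hK3 hS0K hS0
      · right
        rw [Omega1Stationary] at hstat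
        push_neg at hstat
        obtain ⟨C, hC1, hC2, hC3, hC4⟩ := hstat
        have hdisj : ∀ δ ∈ C, δ ∉ IsoSet SM SN idxA idxB := by
          intro δ hδC hδI
          have : δ ∈ IsoSet SM SN idxA idxB ∩ C := ⟨hδI, hδC⟩
          rw [hC4] at this
          exact this
        obtain ⟨cp, hcp1, hcp2, hcp3⟩ := exists_pairing
        exact forall_wins SM SN idxA idxB C cp hidxA hidxA2 hidxB hidxB2 ⟨hC1, hC2, hC3⟩
          hdisj hcp1 hcp2 hcp3
    · -- N empty, M nonempty: ∀ wins
      right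
      obtain ⟨m₀⟩ := hMne
      refine ⟨fun _ _ => Sum.inl m₀, fun _ _ _ _ => rfl, ?_⟩
      intro pl hpl hwin
      have h0 := hwin.1 0 omega1_pos
      rw [hpl 0 omega1_pos] at h0
      obtain ⟨b, -⟩ := opp_inl h0
      exact hNne ⟨b⟩
  · by_cases hNne : Nonempty N
    · -- M empty, N nonempty: ∀ wins
      right
      obtain ⟨n₀⟩ := hNne
      refine ⟨fun _ _ => Sum.inr n₀, fun _ _ _ _ => rfl, ?_⟩
      intro pl hpl hwin
      have h0 := hwin.1 0 omega1_pos
      rw [hpl 0 omega1_pos] at h0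
      obtain ⟨a, -⟩ := opp_inr h0
      exact hMne ⟨a⟩
    · -- both empty: ∃ wins vacuously
      left
      refine ⟨fun _ _ x => x, fun _ _ _ _ _ => rfl, ?_⟩
      intro pl _
      exfalso
      cases h : (pl 0).1 with
      | inl a => exact hMne ⟨a⟩
      | inr b => exact hNne ⟨b⟩
end ExistsSide
end

section
/- Let I be a set and let η : ω → I be injective. For i ∈ I let x_i ∈ ℤ^I be the function with x_i(i) = 1 and x_i(j) = 0 for j ≠ i, and let z ∈ ℤ^I be the function with z(η(n)) = 2ⁿ for every n < ω and z(j) = 0 for every j not in the range of η. Let G be a pure subgroup of ℤ^I (i.e., nG = G ∩ n·ℤ^I for every positive integer n) such that z ∈ G and x_{η(n)} ∈ G for all n < ω. If B is a subgroup of G with x_{η(n)} ∈ B for every n < ω but z ∉ B, then the coset z + B is a nonzero element of the quotient group G/B that is divisible by 2ᵏ in G/B for every k < ω; in particular, G/B is not a free abelian group. -/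
universe u v w x t

open FirstOrder

/-- Let `η : ω → I` be injective, `x i` the characteristic function of
`{i}` in `ℤ^I` and `z` the element with `z (η n) = 2 ^ n`, `z j = 0` off the range of `η`.
If `G ≤ ℤ^I` is pure with `z ∈ G` and `x (η n) ∈ G` for all `n`, and `B ≤ G` contains all
`x (η n)` but not `z`, then `z + B` is a nonzero element of `G ⧸ B` divisible by `2 ^ k`
for every `k`; in particular `G ⧸ B` is not free abelian. -/
theorem quotient_not_free_of_divisible_coset {I : Type u} (η : ℕ → I)
    (hη : Function.Injective η)
    (x : I → I → ℤ) (hx1 : ∀ i, x i i = 1) (hx2 : ∀ i j, j ≠ i → x i j = 0)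
    (z : I → ℤ) (hz1 : ∀ n : ℕ, z (η n) = 2 ^ n)
    (hz2 : ∀ j, j ∉ Set.range η → z j = 0)
    (G : AddSubgroup (I → ℤ))
    (hpure : ∀ n : ℕ, 0 < n →
      {y : I → ℤ | ∃ g ∈ G, y = n • g} = {y : I → ℤ | y ∈ G ∧ ∃ h : I → ℤ, y = n • h})
    (hzG : z ∈ G) (hxG : ∀ n : ℕ, x (η n) ∈ G)
    (B : AddSubgroup ↥G)
    (hxB : ∀ n : ℕ, (⟨x (η n), hxG n⟩ : ↥G) ∈ B)
    (hzB : (⟨z, hzG⟩ : ↥G) ∉ B) :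
    (QuotientAddGroup.mk (⟨z, hzG⟩ : ↥G) : ↥G ⧸ B) ≠ 0 ∧
    (∀ k : ℕ, ∃ y : ↥G ⧸ B,
      (2 ^ k : ℤ) • y = QuotientAddGroup.mk (⟨z, hzG⟩ : ↥G)) ∧
    ¬ FreeAbelian (↥G ⧸ B) := by
  classical
  set Z : ↥G := ⟨z, hzG⟩ with hZ
  have hne : (QuotientAddGroup.mk Z : ↥G ⧸ B) ≠ 0 := by
    intro h
    exact hzB ((QuotientAddGroup.eq_zero_iff Z).mp h)
  have hdiv : ∀ k : ℕ, ∃ y : ↥G ⧸ B,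
      (2 ^ k : ℤ) • y = QuotientAddGroup.mk Z := by
    intro k
    -- the element w = z - ∑_{n<k} 2^n x(η n) is divisible by 2^k in ℤ^I
    set s : I → ℤ := ∑ n ∈ Finset.range k, (2 ^ n : ℤ) • x (η n) with hs
    set w : I → ℤ := z - s with hw
    have hsG : s ∈ G := by
      apply AddSubgroup.sum_mem
      intro n _
      exact AddSubgroup.zsmul_mem G (hxG n) _
    have hwG : w ∈ G := AddSubgroup.sub_mem G hzG hsG
    have hdvd : ∀ j, (2 ^ k : ℤ) ∣ w j := by
      intro j
      have hsj : s j = ∑ n ∈ Finset.range k, (2 ^ n : ℤ) * x (η n) j := by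
        simp [hs, Finset.sum_apply]
      by_cases hj : j ∈ Set.range η
      · obtain ⟨m, rfl⟩ := hj
        have hxval : ∀ n : ℕ, x (η n) (η m) = if n = m then 1 else 0 := by
          intro n
          by_cases hnm : n = m
          · subst hnm; simp [hx1]
          · rw [if_neg hnm]
            exact hx2 (η n) (η m) (fun h => hnm (hη h).symm)
        by_cases hm : m < k
        · have : s (η m) = 2 ^ m := by
            rw [hsj]
            rw [Finset.sum_eq_single m]
            · simp [hxval]
            · intro n _ hnm; simp [hxval, hnm]
            · intro h; exact absurd (Finset.mem_range.mpr hm) h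
          have : w (η m) = 0 := by
            simp [hw, Pi.sub_apply, this, hz1 m]
          simp [this]
        · have : s (η m) = 0 := by
            rw [hsj]
            apply Finset.sum_eq_zero
            intro n hn
            have : n ≠ m := by
              intro h; subst h; exact hm (Finset.mem_range.mp hn)
            simp [hxval, this]
          have hwm : w (η m) = 2 ^ m := by
            simp [hw, Pi.sub_apply, this, hz1 m]
          rw [hwm]
          exact pow_dvd_pow 2 (Nat.le_of_not_lt hm)
      · have hzj : z j = 0 := hz2 j hj
        have hsj0 : s j = 0 := by
          rw [hsj]
          apply Finset.sum_eq_zero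
          intro n _
          have : x (η n) j = 0 := hx2 (η n) j (by
            intro h; exact hj ⟨n, h.symm⟩)
          simp [this]
        simp [hw, Pi.sub_apply, hzj, hsj0]
    -- hence by purity w = 2^k • g for some g ∈ G
    have hmem : w ∈ {y : I → ℤ | y ∈ G ∧ ∃ h : I → ℤ, y = (2 ^ k : ℕ) • h} := by
      refine ⟨hwG, fun j => w j / (2 ^ k : ℤ), ?_⟩
      funext j
      have := (hdvd j)
      simp only [Pi.smul_apply, nsmul_eq_mul, Nat.cast_pow, Nat.cast_ofNat]
      exact (Int.mul_ediv_cancel' this).symm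
    rw [← hpure (2 ^ k) (by positivity)] at hmem
    obtain ⟨g, hgG, hgw⟩ := hmem
    -- lift to ↥G
    set X : ℕ → ↥G := fun n => ⟨x (η n), hxG n⟩ with hX
    set S : ↥G := ∑ n ∈ Finset.range k, (2 ^ n : ℤ) • X n with hS
    have hSval : (S : I → ℤ) = s := by
      simp [hS, hs, hX]
    have hSB : S ∈ B := by
      apply AddSubgroup.sum_mem
      intro n _
      exact AddSubgroup.zsmul_mem B (hxB n) _
    set Gg : ↥G := ⟨g, hgG⟩ with hGg
    have key : (2 ^ k : ℤ) • Gg = Z - S := by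
      apply Subtype.ext
      show (2 ^ k : ℤ) • g = ((Z - S : ↥G) : I → ℤ)
      have h2 : ((2 ^ k : ℤ)) • g = (2 ^ k : ℕ) • g := by
        rw [← natCast_zsmul g (2 ^ k)]; norm_num
      rw [h2, ← hgw]
      show w = ((Z - S : ↥G) : I → ℤ)
      simp [hw, hSval, hZ]
    refine ⟨QuotientAddGroup.mk Gg, ?_⟩
    have : ((2 ^ k : ℤ) • (QuotientAddGroup.mk Gg : ↥G ⧸ B)) =
        QuotientAddGroup.mk ((2 ^ k : ℤ) • Gg) := rfl
    rw [this, key]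
    rw [QuotientAddGroup.eq_iff_sub_mem]
    simpa using AddSubgroup.neg_mem B hSB
  refine ⟨hne, hdiv, ?_⟩
  intro hfree
  have : Module.Free ℤ (↥G ⧸ B) := hfree
  let b := Module.Free.chooseBasis ℤ (↥G ⧸ B)
  have hrepr : b.repr (QuotientAddGroup.mk Z : ↥G ⧸ B) ≠ 0 := by
    intro h
    apply hne
    have h0 : b.repr (QuotientAddGroup.mk Z : ↥G ⧸ B) = b.repr 0 := by simp [h]
    exact b.repr.injective h0
  obtain ⟨i, hi⟩ := Finsupp.ne_iff.mp hrepr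
  have hci : b.repr (QuotientAddGroup.mk Z : ↥G ⧸ B) i ≠ 0 := by simpa using hi
  set c : ℤ := b.repr (QuotientAddGroup.mk Z : ↥G ⧸ B) i with hc
  have hdvdc : ∀ k : ℕ, (2 ^ k : ℤ) ∣ c := by
    intro k
    obtain ⟨y, hy⟩ := hdiv k
    refine ⟨b.repr y i, ?_⟩
    rw [hc, ← hy, map_smul]
    simp
  have hk := hdvdc (c.natAbs + 1)
  have h1 : (2 : ℤ) ^ (c.natAbs + 1) ≤ |c| :=
    Int.le_of_dvd (abs_pos.mpr hci) ((dvd_abs _ _).mpr hk)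
  have h2 : |c| < 2 ^ (c.natAbs + 1) := by
    rw [Int.abs_eq_natAbs]
    have : c.natAbs < 2 ^ (c.natAbs + 1) :=
      Nat.lt_of_lt_of_le (Nat.lt_succ_self _) (Nat.lt_pow_self (by norm_num : 1 < 2)).le
    exact_mod_cast this
  omega
end
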